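/- arXiv:1109.0392 — 6 statements merged into one kernel-verified Lean document; each statement's English description precedes it below -/
import Mathlib

section
/- Let μ be the Gaussian mixture probability measure on ℝ with density g(y) = Σ_{x=1}^k π_x φ_{m_x,σ²}(y), where σ² > 0, π_x > 0 and Σ_{x=1}^k π_x = 1. For a partition (I_1, …, I_k) of ℝ into k pairwise disjoint intervals whose union is ℝ, set σ²_{I_1,…,I_k} = Σ_{j=1}^k μ(I_j) · Var(μ ∣ I_j), with the convention that terms with μ(I_j) = 0 equal 0. Then the infimum of σ²_{I_1,…,I_k} over all partitions of ℝ into k intervals is strictly positive. -/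
/-!
The mixture has a density bounded above by a constant `C` and bounded below by a positive
constant on every compact set. Fix a window `W = [-n, n]` of mass more than `k / (k + 1)`.
Whatever the partition, some piece `I j` meets `W` in mass more than `β = 1 / (k + 1)`, hence in
an interval of length `ℓ > β / C`. A third of that interval lies at distance at least `ℓ / 6` from
the conditional mean of `μ[|I j]` and has conditional mass at least `c ℓ / 3`, so Chebyshev's
inequality bounds `Var(μ | I j)` below independently of the partition.
-/

open MeasureTheory ProbabilityTheory Set Metric
open scoped NNReal ENNReal

theorem Set.OrdConnected.exists_Ioo_subset_of_lt_volume {s : Set ℝ} (hs : s.OrdConnected)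
    {ℓ : ℝ} (h : ENNReal.ofReal ℓ < volume s) : ∃ a, Ioo a (a + ℓ) ⊆ s := by
  obtain ⟨x, hx, y, hy, hxy⟩ : ∃ x ∈ s, ∃ y ∈ s, ENNReal.ofReal ℓ < edist x y := by
    simpa only [Metric.ediam, lt_iSup_iff, exists_prop] using h.trans_le (Real.volume_le_diam s)
  rw [edist_dist, Real.dist_eq, ENNReal.ofReal_lt_ofReal_iff'] at hxy
  refine ⟨min x y, fun z hz => hs.uIcc_subset hx hy ⟨hz.1.le, ?_⟩⟩
  linarith [hz.2, hxy.1, max_sub_min_eq_abs' x y]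

theorem exists_Ioo_subset_Ioo_forall_le_abs_sub (a ℓ m : ℝ) :
    ∃ b, Ioo b (b + ℓ / 3) ⊆ Ioo a (a + ℓ) ∧ ∀ x ∈ Ioo b (b + ℓ / 3), ℓ / 6 ≤ |x - m| := by
  rcases le_or_gt m (a + ℓ / 2) with hm | hm
  · refine ⟨a + 2 * ℓ / 3, fun x hx => ⟨by linarith [hx.1, hx.2], by linarith [hx.2]⟩,
      fun x hx => le_abs.2 (Or.inl (by linarith [hx.1]))⟩
  · refine ⟨a, fun x hx => ⟨hx.1, by linarith [hx.1, hx.2]⟩,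
      fun x hx => le_abs.2 (Or.inr (by linarith [hx.2]))⟩

theorem exists_lt_measure_closedBall {X : Type*} [PseudoMetricSpace X] [MeasurableSpace X]
    (μ : Measure X) (x : X) {t : ℝ≥0∞} (ht : t < μ univ) :
    ∃ n : ℕ, t < μ (closedBall x n) := by
  have hmono : Monotone fun n : ℕ => closedBall x n := fun _ _ hab =>
    closedBall_subset_closedBall (Nat.cast_le.mpr hab)
  have hlim := tendsto_measure_iUnion_atTop (μ := μ) hmono
  rw [iUnion_closedBall_nat] at hlim
  exact (hlim.eventually_const_lt ht).exists

theorem exists_lt_measure_inter_of_iUnion_eq_univ {α ι : Type*} [MeasurableSpace α]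
    [Fintype ι] (μ : Measure α) {I : ι → Set α} (hI : ⋃ j, I j = univ) (W : Set α)
    {t : ℝ≥0∞} (ht : Fintype.card ι * t < μ W) : ∃ j, t < μ (I j ∩ W) := by
  by_contra! h
  refine ht.not_ge ?_
  calc μ W = μ (⋃ j, I j ∩ W) := by rw [← iUnion_inter, hI, univ_inter]
    _ ≤ ∑ j, μ (I j ∩ W) := measure_iUnion_fintype_le μ _
    _ ≤ ∑ _j : ι, t := Finset.sum_le_sum fun j _ => h j
    _ = Fintype.card ι * t := by simp

theorem mul_measureReal_le_variance {Ω : Type*} [MeasurableSpace Ω] {μ : Measure Ω}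
    [IsFiniteMeasure μ] {X : Ω → ℝ} (hX : MemLp X 2 μ) {d : ℝ} (hd : 0 < d) {J : Set Ω}
    (hJ : ∀ ω ∈ J, d ≤ |X ω - μ[X]|) : d ^ 2 * μ.real J ≤ variance X μ := by
  have hcheb := (measure_mono hJ).trans (meas_ge_le_variance_div_sq hX hd)
  rw [← le_div_iff₀' (by positivity)]
  have hvar : 0 ≤ variance X μ / d ^ 2 := div_nonneg (variance_nonneg X μ) (sq_nonneg d)
  simpa [measureReal_def, ENNReal.toReal_ofReal hvar] using
    ENNReal.toReal_mono ENNReal.ofReal_ne_top hcheb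

theorem measure_le_cond_apply {Ω : Type*} [MeasurableSpace Ω] {μ : Measure Ω}
    [IsProbabilityMeasure μ] {s t : Set Ω} (hs : MeasurableSet s) (hts : t ⊆ s) :
    μ t ≤ μ[t | s] := by
  rw [cond_apply hs, inter_eq_self_of_subset_right hts]
  exact le_mul_of_one_le_left' (ENNReal.one_le_inv.mpr prob_le_one)

theorem MeasureTheory.MemLp.cond {Ω E : Type*} [MeasurableSpace Ω] [NormedAddCommGroup E]
    {μ : Measure Ω} {f : Ω → E} {p : ℝ≥0∞} (hf : MemLp f p μ) {s : Set Ω} (hs : μ s ≠ 0) :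
    MemLp f p μ[|s] :=
  (hf.restrict s).smul_measure (ENNReal.inv_ne_top.mpr hs)

theorem le_variance_cond_of_Ioo_subset {μ : Measure ℝ} [IsProbabilityMeasure μ]
    (hμ : MemLp id 2 μ) {s W : Set ℝ} (hs : MeasurableSet s) {c ℓ a : ℝ} (hc : 0 < c) (hℓ : 0 < ℓ)
    (hW : ENNReal.ofReal c • volume.restrict W ≤ μ) (hsub : Ioo a (a + ℓ) ⊆ s ∩ W) :
    (ℓ / 6) ^ 2 * (c * (ℓ / 3)) ≤ variance id μ[|s] := by
  obtain ⟨b, hJsub, hJfar⟩ := exists_Ioo_subset_Ioo_forall_le_abs_sub a ℓ (μ[|s])[id]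
  set J := Ioo b (b + ℓ / 3)
  have hJs : J ⊆ s := fun x hx => (hsub (hJsub hx)).1
  have hJW : J ⊆ W := fun x hx => (hsub (hJsub hx)).2
  have hμJ : ENNReal.ofReal (c * (ℓ / 3)) ≤ μ J := by
    have hWJ := hW J
    rwa [Measure.smul_apply, Measure.restrict_apply measurableSet_Ioo,
      inter_eq_self_of_subset_left hJW, Real.volume_Ioo, add_sub_cancel_left, smul_eq_mul,
      ← ENNReal.ofReal_mul hc.le] at hWJ
  have hμs : μ s ≠ 0 := by
    refine (lt_of_lt_of_le ?_ (hμJ.trans (measure_mono hJs))).ne'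
    exact ENNReal.ofReal_pos.2 (by positivity)
  have := cond_isProbabilityMeasure hμs
  have hνJ : c * (ℓ / 3) ≤ μ[|s].real J := by
    rw [measureReal_def, ← ENNReal.ofReal_le_iff_le_toReal (measure_ne_top _ _)]
    exact hμJ.trans (measure_le_cond_apply hs hJs)
  calc (ℓ / 6) ^ 2 * (c * (ℓ / 3)) ≤ (ℓ / 6) ^ 2 * μ[|s].real J := by gcongr
    _ ≤ variance id μ[|s] := mul_measureReal_le_variance (hμ.cond hμs) (by positivity) hJfar

theorem exists_pos_le_sum_mul_variance_cond {μ : Measure ℝ} [IsProbabilityMeasure μ]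
    (hμ : MemLp id 2 μ) {C : ℝ} (hC : 0 < C) (hle : μ ≤ ENNReal.ofReal C • volume)
    (hge : ∀ K, IsCompact K → ∃ c > 0, ENNReal.ofReal c • volume.restrict K ≤ μ)
    (ι : Type*) [Fintype ι] :
    ∃ ε > 0, ∀ I : ι → Set ℝ, (∀ j, (I j).OrdConnected) → (⋃ j, I j) = univ →
      ε ≤ ∑ j, (μ (I j)).toReal * variance id μ[|I j] := by
  set β : ℝ := ((Fintype.card ι : ℝ) + 1)⁻¹
  have hβcard : Fintype.card ι * ENNReal.ofReal β < μ univ := by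
    rw [measure_univ, ← ENNReal.ofReal_natCast, ← ENNReal.ofReal_mul (Nat.cast_nonneg _),
      ENNReal.ofReal_lt_one, ← div_eq_mul_inv, div_lt_one (by positivity)]
    exact lt_add_one _
  obtain ⟨n, hn⟩ := exists_lt_measure_closedBall μ 0 hβcard
  obtain ⟨c, hc, hcW⟩ := hge _ (isCompact_closedBall 0 n)
  set ℓ := β / C
  refine ⟨β * ((ℓ / 6) ^ 2 * (c * (ℓ / 3))), by positivity, fun I hI hcov => ?_⟩
  obtain ⟨j, hj⟩ := exists_lt_measure_inter_of_iUnion_eq_univ μ hcov _ hn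
  have hvol : ENNReal.ofReal ℓ < volume (I j ∩ closedBall 0 n) := by
    rw [ENNReal.ofReal_div_of_pos hC, ENNReal.div_lt_iff (by simp [hC]) (by simp), mul_comm]
    exact hj.trans_le (hle _)
  have hWconn : (closedBall (0 : ℝ) n).OrdConnected := by
    rw [Real.closedBall_eq_Icc]; exact ordConnected_Icc
  obtain ⟨a, ha⟩ := ((hI j).inter hWconn).exists_Ioo_subset_of_lt_volume hvol
  have hmass : β ≤ (μ (I j)).toReal := by
    rw [← ENNReal.ofReal_le_iff_le_toReal (measure_ne_top _ _)]
    exact hj.le.trans (measure_mono inter_subset_left)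
  calc β * ((ℓ / 6) ^ 2 * (c * (ℓ / 3))) ≤ (μ (I j)).toReal * variance id μ[|I j] :=
        mul_le_mul hmass
          (le_variance_cond_of_Ioo_subset hμ (hI j).measurableSet hc (by positivity) hcW ha)
          (by positivity) ENNReal.toReal_nonneg
    _ ≤ ∑ j, (μ (I j)).toReal * variance id μ[|I j] :=
        Finset.single_le_sum (f := fun j => (μ (I j)).toReal * variance id μ[|I j])
          (fun j _ => mul_nonneg ENNReal.toReal_nonneg (variance_nonneg _ _)) (Finset.mem_univ j)

theorem gaussianPDFReal_le (m : ℝ) (v : ℝ≥0) (x : ℝ) :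
    gaussianPDFReal m v x ≤ (√(2 * Real.pi * v))⁻¹ := by
  rw [gaussianPDFReal]
  refine mul_le_of_le_one_right (by positivity) (Real.exp_le_one_iff.2 ?_)
  exact div_nonpos_of_nonpos_of_nonneg (neg_nonpos.2 (sq_nonneg _)) (by positivity)

theorem continuous_gaussianPDFReal (m : ℝ) (v : ℝ≥0) : Continuous (gaussianPDFReal m v) := by
  unfold gaussianPDFReal; fun_prop

theorem gaussianReal_le_smul_volume (m : ℝ) {v : ℝ≥0} (hv : v ≠ 0) :
    gaussianReal m v ≤ ENNReal.ofReal (√(2 * Real.pi * v))⁻¹ • volume := by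
  rw [gaussianReal_of_var_ne_zero _ hv, ← withDensity_const]
  exact withDensity_mono <| ae_of_all _ fun x =>
    ENNReal.ofReal_le_ofReal (gaussianPDFReal_le m v x)

theorem exists_smul_restrict_le_gaussianReal (m : ℝ) {v : ℝ≥0} (hv : v ≠ 0) {K : Set ℝ}
    (hK : IsCompact K) : ∃ c > 0, ENNReal.ofReal c • volume.restrict K ≤ gaussianReal m v := by
  obtain ⟨c, hc, hcK⟩ := hK.exists_forall_le' (continuous_gaussianPDFReal m v).continuousOn
    fun x _ => gaussianPDFReal_pos m v x hv
  refine ⟨c, hc, ?_⟩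
  calc ENNReal.ofReal c • volume.restrict K
      = (volume.restrict K).withDensity fun _ => ENNReal.ofReal c := (withDensity_const _).symm
    _ ≤ (volume.restrict K).withDensity (gaussianPDF m v) :=
        withDensity_mono <| (ae_restrict_iff' hK.measurableSet).2 <|
          ae_of_all _ fun x hx => ENNReal.ofReal_le_ofReal (hcK x hx)
    _ = (volume.withDensity (gaussianPDF m v)).restrict K :=
        (restrict_withDensity hK.measurableSet _).symm
    _ ≤ gaussianReal m v := by
        rw [gaussianReal_of_var_ne_zero _ hv]; exact Measure.restrict_le_self

noncomputable def gaussianMixture {ι : Type*} [Fintype ι] (w m : ι → ℝ) (v : ℝ≥0) : Measure ℝ :=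
  ∑ i, ENNReal.ofReal (w i) • gaussianReal (m i) v

section gaussianMixture

variable {ι : Type*} [Fintype ι] {w : ι → ℝ} (m : ι → ℝ) {v : ℝ≥0}

theorem isProbabilityMeasure_gaussianMixture (hw : ∀ i, 0 ≤ w i) (hsum : ∑ i, w i = 1) :
    IsProbabilityMeasure (gaussianMixture w m v) := by
  constructor
  simp [gaussianMixture, ← ENNReal.ofReal_sum_of_nonneg fun i _ => hw i, hsum]

theorem memLp_id_two_gaussianMixture : MemLp id 2 (gaussianMixture w m v) := by
  refine (memLp_two_iff_integrable_sq aestronglyMeasurable_id).2 <|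
    integrable_finsetSum_measure.2 fun i _ => Integrable.smul_measure ?_ ENNReal.ofReal_ne_top
  exact (memLp_two_iff_integrable_sq aestronglyMeasurable_id).1 (memLp_id_gaussianReal 2)

theorem gaussianMixture_le_smul_volume (hw : ∀ i, 0 ≤ w i) (hsum : ∑ i, w i = 1)
    (hv : v ≠ 0) :
    gaussianMixture w m v ≤ ENNReal.ofReal (√(2 * Real.pi * v))⁻¹ • volume := by
  calc gaussianMixture w m v
      ≤ ∑ i, ENNReal.ofReal (w i) • ENNReal.ofReal (√(2 * Real.pi * v))⁻¹ • volume :=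
        Finset.sum_le_sum fun i _ => by gcongr; exact gaussianReal_le_smul_volume (m i) hv
    _ = ENNReal.ofReal (√(2 * Real.pi * v))⁻¹ • volume := by
        rw [← Finset.sum_smul, ← ENNReal.ofReal_sum_of_nonneg fun i _ => hw i, hsum,
          ENNReal.ofReal_one, one_smul]

theorem exists_smul_restrict_le_gaussianMixture (hv : v ≠ 0) {i : ι} (hi : 0 < w i)
    {K : Set ℝ} (hK : IsCompact K) :
    ∃ c > 0, ENNReal.ofReal c • volume.restrict K ≤ gaussianMixture w m v := by
  obtain ⟨c, hc, hcK⟩ := exists_smul_restrict_le_gaussianReal (m i) hv hK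
  refine ⟨w i * c, mul_pos hi hc, ?_⟩
  calc ENNReal.ofReal (w i * c) • volume.restrict K
      = ENNReal.ofReal (w i) • ENNReal.ofReal c • volume.restrict K := by
        rw [ENNReal.ofReal_mul hi.le, mul_smul]
    _ ≤ ENNReal.ofReal (w i) • gaussianReal (m i) v := by gcongr
    _ ≤ gaussianMixture w m v :=
        Finset.single_le_sum (f := fun i => ENNReal.ofReal (w i) • gaussianReal (m i) v)
          (fun _ _ => Measure.zero_le _) (Finset.mem_univ i)

end gaussianMixture

/-- For a Gaussian mixture `μ` on `ℝ`, the infimum, over all partitions of `ℝ` into `k`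
intervals, of the mean within-interval conditional variance
`∑ j, μ(I j) * Var(μ | I j)` is strictly positive. -/
theorem inf_partition_condVar_pos
    (k : ℕ) (hk : 1 ≤ k) (σ2 : ℝ) (hσ2 : 0 < σ2) (m : Fin k → ℝ)
    (π' : Fin k → ℝ) (hπ : ∀ x, 0 < π' x) (hπsum : ∑ x, π' x = 1)
    (μ : Measure ℝ)
    (hμ : μ = ∑ x, ENNReal.ofReal (π' x) • gaussianReal (m x) (⟨σ2, hσ2.le⟩ : ℝ≥0)) :
    ∃ ε > 0, ∀ I : Fin k → Set ℝ,
      (∀ j, (I j).OrdConnected) → Pairwise (Function.onFun Disjoint I) →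
      (⋃ j, I j) = Set.univ →
      ε ≤ ∑ j, (μ (I j)).toReal * variance id (μ[|I j]) := by
  set v : ℝ≥0 := ⟨σ2, hσ2.le⟩
  have hv : 0 < v := NNReal.coe_pos.mp hσ2
  have hw : ∀ x, 0 ≤ π' x := fun x => (hπ x).le
  change μ = gaussianMixture π' m v at hμ
  subst hμ
  have := isProbabilityMeasure_gaussianMixture m (v := v) hw hπsum
  obtain ⟨ε, hε, h⟩ := exists_pos_le_sum_mul_variance_cond (memLp_id_two_gaussianMixture m)
    (by positivity) (gaussianMixture_le_smul_volume m hw hπsum hv.ne')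
    (fun K hK => exists_smul_restrict_le_gaussianMixture m hv.ne' (hπ ⟨0, hk⟩) hK) (Fin k)
  exact ⟨ε, hε, fun I hI _ hcov => h I hI hcov⟩
end

section
/- Let μ be the Gaussian mixture probability measure on ℝ with density g(y) = Σ_{x=1}^k π_x φ_{m_x,σ²}(y), where σ² > 0, π_x > 0 and Σ_{x=1}^k π_x = 1. Then the map (a, b) ↦ Var(μ ∣ (a, b)) is continuous on the set {(a, b) ∈ ℝ² : a < b}. -/
/-! Conditioned on `(a, b)`, the variance is `M₂/M₀ - (M₁/M₀)²` with `Mₙ(a, b) = ∫_(a,b) xⁿ dμ`.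
For an atomless locally finite measure each `Mₙ` is a difference of values of a continuous
primitive, and `M₀ > 0` on `{a < b}` because a Gaussian mixture charges every nonempty open set. -/

open MeasureTheory ProbabilityTheory Set
open scoped NNReal ENNReal

theorem continuous_setIntegral_Ioo {E : Type*} [NormedAddCommGroup E] [NormedSpace ℝ E]
    {μ : Measure ℝ} [NullSingletonClass μ] {f : ℝ → E}
    (hf : ∀ a b, IntervalIntegrable f μ a b) :
    Continuous fun p : ℝ × ℝ => ∫ x in Ioo p.1 p.2, f x ∂μ := by
  have h (a b : ℝ) : ∫ x in Ioo a b, f x ∂μ = ∫ x in a..max a b, f x ∂μ := by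
    rw [intervalIntegral.integral_of_le (le_max_left a b), ← integral_Ioc_eq_integral_Ioo]
    rcases le_total a b with hab | hba
    · rw [max_eq_right hab]
    · rw [max_eq_left hba, Ioc_eq_empty_of_le hba, Ioc_self]
  have hF := intervalIntegral.continuous_primitive hf 0
  convert (hF.comp (continuous_fst.max continuous_snd)).sub (hF.comp continuous_fst) using 2 with p
  rw [h]
  exact (intervalIntegral.integral_interval_sub_left (hf 0 _) (hf 0 _)).symm

theorem variance_id_cond {μ : Measure ℝ} [IsFiniteMeasureOnCompacts μ] {s : Set ℝ}
    (hs : MeasurableSet s) (hbdd : Bornology.IsBounded s) (hμs : μ s ≠ 0) :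
    variance id μ[|s] =
      (μ.real s)⁻¹ * ∫ x in s, x ^ 2 ∂μ - ((μ.real s)⁻¹ * ∫ x in s, x ∂μ) ^ 2 := by
  have := cond_isProbabilityMeasure_of_finite hμs (hbdd.measure_lt_top).ne
  obtain ⟨C, hC⟩ := hbdd.exists_norm_le
  have hmem : MemLp id 2 μ[|s] := by
    refine (memLp_top_of_bound aestronglyMeasurable_id C ?_).mono_exponent le_top
    have : ∀ᵐ x ∂μ.restrict s, x ∈ s := ae_restrict_mem hs
    filter_upwards [Measure.ae_smul_measure this (μ s)⁻¹] with x hx using hC x hx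
  have hint (f : ℝ → ℝ) : ∫ x, f x ∂μ[|s] = (μ.real s)⁻¹ * ∫ x in s, f x ∂μ := by
    rw [ProbabilityTheory.cond, integral_smul_measure, ENNReal.toReal_inv, smul_eq_mul]
    rfl
  rw [variance_eq_sub hmem]
  simp only [Pi.pow_apply, id_eq]
  rw [hint, hint]

theorem continuousOn_variance_cond_Ioo (μ : Measure ℝ) [IsLocallyFiniteMeasure μ]
    [NullSingletonClass μ] [μ.IsOpenPosMeasure] :
    ContinuousOn (fun p : ℝ × ℝ => variance id μ[|Ioo p.1 p.2]) {p | p.1 < p.2} := by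
  have hmoment (n : ℕ) : Continuous fun p : ℝ × ℝ => ∫ x in Ioo p.1 p.2, x ^ n ∂μ :=
    continuous_setIntegral_Ioo (continuous_pow n).intervalIntegrable
  have hmass : Continuous fun p : ℝ × ℝ => μ.real (Ioo p.1 p.2) := by
    simpa using hmoment 0
  have hne : ∀ p ∈ {p : ℝ × ℝ | p.1 < p.2}, μ (Ioo p.1 p.2) ≠ 0 := fun p hp =>
    isOpen_Ioo.measure_ne_zero μ (nonempty_Ioo.2 hp)
  have hinv : ContinuousOn (fun p : ℝ × ℝ => (μ.real (Ioo p.1 p.2))⁻¹) {p | p.1 < p.2} :=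
    hmass.continuousOn.inv₀ fun p hp =>
      ENNReal.toReal_ne_zero.2 ⟨hne p hp, measure_Ioo_lt_top.ne⟩
  refine ((hinv.mul (hmoment 2).continuousOn).sub
    ((hinv.mul (hmoment 1).continuousOn).pow 2)).congr fun p hp => ?_
  simpa using variance_id_cond measurableSet_Ioo (Metric.isBounded_Ioo _ _) (hne p hp)

theorem nullSingletonClass_finset_sum_smul {α ι : Type*} [MeasurableSpace α] (s : Finset ι)
    (c : ι → ℝ≥0∞) (ν : ι → Measure α) [∀ i, NullSingletonClass (ν i)] :
    NullSingletonClass (∑ i ∈ s, c i • ν i) :=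
  ⟨fun x => by simp⟩

theorem isOpenPosMeasure_finset_sum_smul {α ι : Type*} [MeasurableSpace α] [TopologicalSpace α]
    {s : Finset ι} {c : ι → ℝ≥0∞} {ν : ι → Measure α} {i : ι} (hi : i ∈ s) (hc : c i ≠ 0)
    [(ν i).IsOpenPosMeasure] :
    Measure.IsOpenPosMeasure (∑ j ∈ s, c j • ν j) :=
  have := Measure.isOpenPosMeasure_smul (ν i) hc
  (Finset.single_le_sum (f := fun j => c j • ν j) (fun _ _ => Measure.zero_le _)
    hi).isOpenPosMeasure

theorem isFiniteMeasure_finset_sum_smul {α ι : Type*} [MeasurableSpace α] (s : Finset ι)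
    {c : ι → ℝ≥0∞} (hc : ∀ i, c i ≠ ∞) (ν : ι → Measure α) [∀ i, IsFiniteMeasure (ν i)] :
    IsFiniteMeasure (∑ i ∈ s, c i • ν i) :=
  ⟨by simp [ENNReal.mul_lt_top, (hc _).lt_top, measure_lt_top]⟩

theorem nullSingletonClass_gaussianReal (m : ℝ) {v : ℝ≥0} (hv : v ≠ 0) :
    NullSingletonClass (gaussianReal m v) := by
  rw [gaussianReal_of_var_ne_zero m hv]
  infer_instance

theorem isOpenPosMeasure_gaussianReal (m : ℝ) {v : ℝ≥0} (hv : v ≠ 0) :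
    (gaussianReal m v).IsOpenPosMeasure :=
  (gaussianReal_absolutelyContinuous' m hv).isOpenPosMeasure

theorem continuousOn_condVar_Ioo_general
    (k : ℕ) (hk : 1 ≤ k) (σ2 : ℝ) (hσ2 : 0 < σ2) (m : Fin k → ℝ)
    (π' : Fin k → ℝ) (hπ : ∀ x, 0 < π' x)
    (μ : Measure ℝ)
    (hμ : μ = ∑ x, ENNReal.ofReal (π' x) • gaussianReal (m x) (⟨σ2, hσ2.le⟩ : ℝ≥0)) :
    ContinuousOn (fun p : ℝ × ℝ => variance id (μ[|Set.Ioo p.1 p.2]))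
      {p : ℝ × ℝ | p.1 < p.2} := by
  -- instance search does not see through the anonymous constructor `⟨σ2, _⟩ : ℝ≥0`
  set v : ℝ≥0 := ⟨σ2, hσ2.le⟩
  have hv : v ≠ 0 := fun h => hσ2.ne' (congrArg NNReal.toReal h)
  have := fun x => nullSingletonClass_gaussianReal (m x) hv
  have := fun x => isOpenPosMeasure_gaussianReal (m x) hv
  have := isFiniteMeasure_finset_sum_smul Finset.univ
    (fun x => ENNReal.ofReal_ne_top (r := π' x)) fun x => gaussianReal (m x) v
  have := nullSingletonClass_finset_sum_smul Finset.univ (fun x => ENNReal.ofReal (π' x))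
    fun x => gaussianReal (m x) v
  have := isOpenPosMeasure_finset_sum_smul (c := fun x => ENNReal.ofReal (π' x))
    (ν := fun x => gaussianReal (m x) v) (Finset.mem_univ ⟨0, hk⟩)
    (ENNReal.ofReal_pos.2 (hπ ⟨0, hk⟩)).ne'
  subst hμ
  exact continuousOn_variance_cond_Ioo _

/-- For a Gaussian mixture `μ` on `ℝ`, the map `(a, b) ↦ Var(μ | (a, b))` is continuous on
`{(a, b) : a < b}`. -/
theorem continuousOn_condVar_Ioo
    (k : ℕ) (hk : 1 ≤ k) (σ2 : ℝ) (hσ2 : 0 < σ2) (m : Fin k → ℝ)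
    (π' : Fin k → ℝ) (hπ : ∀ x, 0 < π' x) (hπsum : ∑ x, π' x = 1)
    (μ : Measure ℝ)
    (hμ : μ = ∑ x, ENNReal.ofReal (π' x) • gaussianReal (m x) (⟨σ2, hσ2.le⟩ : ℝ≥0)) :
    ContinuousOn (fun p : ℝ × ℝ => variance id (μ[|Set.Ioo p.1 p.2]))
      {p : ℝ × ℝ | p.1 < p.2} :=
  continuousOn_condVar_Ioo_general k hk σ2 hσ2 m π' hπ μ hμ
end

section
/- Let (Ω, 𝓕, P) be a probability space, T : Ω → Ω an ergodic measure-preserving map, and f : Ω → ℝ measurable with law μ. Assume μ is atomless and ∫ x² dμ(x) < ∞. For i ≥ 1 set Y_i = f ∘ T^{i−1}. Then for each a ∈ {0, 1, 2}, for P-almost every ω, sup_I | (1/n) Σ_{i=1}^n Y_i(ω)^a · 1_I(Y_i(ω)) − ∫ x^a 1_I(x) dμ(x) | → 0 as n → ∞, where the supremum is over all intervals I ⊆ ℝ. -/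
/-!
Write `μ = P.map f`. Splitting `x ↦ x ^ a` into its positive and negative parts, and an interval
into the difference of two nested lower sets, reduces the claim to a nonnegative integrable
weight `w` and lower sets `J`. The weighted measure `ν = w • μ` is finite and atomless, so by the
intermediate value theorem there are lower sets of every `ν`-measure in `[0, ν ℝ]`. Birkhoff's
ergodic theorem (via Garsia's maximal inequality) gives almost sure convergence of the weighted
empirical averages simultaneously on the countably many such level sets at rational heights.
Since the lower sets of `ℝ` form a chain, every lower set `J` is sandwiched between two level
sets at heights in `δℤ` that differ by `2δ`, so by monotonicity of both sides in `J` the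
convergence at the finitely many heights in `δℤ ∩ [-δ, ν ℝ + δ]` is uniform in `J` (Pólya's
argument).
-/
open MeasureTheory Set Filter Topology

section BirkhoffSums

variable {Ω : Type*} {T : Ω → Ω} {h : Ω → ℝ}

noncomputable def birkhoffSumMax (T : Ω → Ω) (h : Ω → ℝ) (N : ℕ) (ω : Ω) : ℝ :=
  partialSups (birkhoffSum T h · ω) N

lemma birkhoffSum_le_birkhoffSumMax {k N : ℕ} (hk : k ≤ N) (ω : Ω) :
    birkhoffSum T h k ω ≤ birkhoffSumMax T h N ω :=
  le_partialSups_of_le (birkhoffSum T h · ω) hk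

lemma birkhoffSumMax_nonneg (N : ℕ) (ω : Ω) : 0 ≤ birkhoffSumMax T h N ω := by
  simpa using birkhoffSum_le_birkhoffSumMax (T := T) (h := h) (Nat.zero_le N) ω

lemma birkhoffSumMax_zero : birkhoffSumMax T h 0 = 0 := by
  ext ω; simp [birkhoffSumMax]

lemma birkhoffSumMax_succ (N : ℕ) :
    birkhoffSumMax T h (N + 1) = fun ω =>
      max (birkhoffSumMax T h N ω) (birkhoffSum T h (N + 1) ω) := by
  ext ω
  exact partialSups_succ (birkhoffSum T h · ω) N

lemma birkhoffSumMax_le_add_birkhoffSumMax_apply {N : ℕ} {ω : Ω}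
    (hpos : 0 < birkhoffSumMax T h N ω) :
    birkhoffSumMax T h N ω ≤ h ω + birkhoffSumMax T h N (T ω) := by
  have : birkhoffSumMax T h N ω ≤ max 0 (h ω + birkhoffSumMax T h N (T ω)) := by
    refine partialSups_le _ _ _ fun k hk => ?_
    cases k with
    | zero => simp
    | succ k =>
      rw [birkhoffSum_succ']
      have := birkhoffSum_le_birkhoffSumMax (T := T) (h := h) (show k ≤ N by omega) (T ω)
      exact le_max_of_le_right (by linarith)
  exact (le_max_iff.1 this).resolve_left hpos.not_ge

lemma bddAbove_range_birkhoffSum_apply_iff (ω : Ω) :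
    BddAbove (range fun n => birkhoffSum T h n (T ω)) ↔
      BddAbove (range fun n => birkhoffSum T h n ω) := by
  simp only [bddAbove_def, forall_mem_range]
  constructor
  · rintro ⟨M, hM⟩
    refine ⟨max 0 (h ω + M), fun n => ?_⟩
    cases n with
    | zero => simp
    | succ n => rw [birkhoffSum_succ']; exact le_max_of_le_right (by linarith [hM n])
  · rintro ⟨M, hM⟩
    refine ⟨M - h ω, fun n => ?_⟩
    have := hM (n + 1)
    rw [birkhoffSum_succ'] at this
    linarith

lemma birkhoffSum_sub_const (c : ℝ) (n : ℕ) (ω : Ω) :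
    birkhoffSum T (fun ω => h ω - c) n ω = birkhoffSum T h n ω - n * c := by
  simp [birkhoffSum, Finset.sum_sub_distrib]

lemma birkhoffAverage_mono {g g' : Ω → ℝ} (h : g ≤ g') (n : ℕ) (ω : Ω) :
    birkhoffAverage ℝ T g n ω ≤ birkhoffAverage ℝ T g' n ω :=
  smul_le_smul_of_nonneg_left (Finset.sum_le_sum fun _ _ => h _) (by positivity)

end BirkhoffSums

section Birkhoff

variable {Ω : Type*} [MeasurableSpace Ω] {P : Measure Ω} {T : Ω → Ω} {h : Ω → ℝ}

lemma measurable_birkhoffSum (hT : Measurable T) (hh : Measurable h) (n : ℕ) :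
    Measurable (birkhoffSum T h n) :=
  Finset.measurable_sum _ fun i _ => hh.comp (hT.iterate i)

lemma integrable_birkhoffSum (hT : MeasurePreserving T P P) (hh : Integrable h P) (n : ℕ) :
    Integrable (birkhoffSum T h n) P :=
  integrable_finsetSum _ fun i _ => (hT.iterate i).integrable_comp_of_integrable hh

lemma measurable_birkhoffSumMax (hT : Measurable T) (hh : Measurable h) (N : ℕ) :
    Measurable (birkhoffSumMax T h N) := by
  induction N with
  | zero => rw [birkhoffSumMax_zero]; exact measurable_const
  | succ N ih => rw [birkhoffSumMax_succ]; exact ih.max (measurable_birkhoffSum hT hh _)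

lemma integrable_birkhoffSumMax (hT : MeasurePreserving T P P) (hh : Integrable h P) (N : ℕ) :
    Integrable (birkhoffSumMax T h N) P := by
  induction N with
  | zero => rw [birkhoffSumMax_zero]; exact integrable_zero _ _ _
  | succ N ih => rw [birkhoffSumMax_succ]; exact ih.sup (integrable_birkhoffSum hT hh _)

/-- Garsia's maximal inequality. -/
lemma setIntegral_birkhoffSumMax_pos_nonneg (hT : MeasurePreserving T P P) (hhm : Measurable h)
    (hh : Integrable h P) (N : ℕ) :
    0 ≤ ∫ ω in {ω | 0 < birkhoffSumMax T h N ω}, h ω ∂P := by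
  have hE : MeasurableSet {ω | 0 < birkhoffSumMax T h N ω} :=
    measurableSet_lt measurable_const (measurable_birkhoffSumMax hT.measurable hhm N)
  have hM := integrable_birkhoffSumMax hT hh N
  have hMT : Integrable (fun ω => birkhoffSumMax T h N (T ω)) P :=
    hT.integrable_comp_of_integrable hM
  have hpt (ω : Ω) : birkhoffSumMax T h N ω ≤
      {ω | 0 < birkhoffSumMax T h N ω}.indicator h ω + birkhoffSumMax T h N (T ω) := by
    by_cases hω : ω ∈ {ω | 0 < birkhoffSumMax T h N ω}
    · rw [indicator_of_mem hω]
      exact birkhoffSumMax_le_add_birkhoffSumMax_apply hω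
    · rw [indicator_of_notMem hω, zero_add,
        le_antisymm (not_lt.1 hω) (birkhoffSumMax_nonneg N ω)]
      exact birkhoffSumMax_nonneg N _
  have := integral_mono hM ((hh.indicator hE).add hMT) hpt
  rw [integral_add' (hh.indicator hE) hMT, integral_indicator hE,
    ← integral_map hT.measurable.aemeasurable
      (measurable_birkhoffSumMax hT.measurable hhm N).aestronglyMeasurable, hT.map_eq] at this
  linarith

/-- The set where the Birkhoff sums are bounded above is `T`-invariant. If it were null, the sets
`{0 < birkhoffSumMax T h N}` would exhaust `Ω` and Garsia's inequality would give `0 ≤ ∫ h`. -/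
lemma Ergodic.ae_bddAbove_birkhoffSum (hT : Ergodic T P) (hhm : Measurable h)
    (hh : Integrable h P) (hneg : ∫ ω, h ω ∂P < 0) :
    ∀ᵐ ω ∂P, BddAbove (range fun n => birkhoffSum T h n ω) := by
  have hA : MeasurableSet {ω | BddAbove (range fun n => birkhoffSum T h n ω)} :=
    measurableSet_bddAbove_range (measurable_birkhoffSum hT.measurable hhm)
  have hinv : T ⁻¹' {ω | BddAbove (range fun n => birkhoffSum T h n ω)} =
      {ω | BddAbove (range fun n => birkhoffSum T h n ω)} :=
    ext bddAbove_range_birkhoffSum_apply_iff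
  refine (hT.measure_self_or_compl_eq_zero hA hinv).resolve_left fun hbdd => ?_
  set E : ℕ → Set Ω := fun N => {ω | 0 < birkhoffSumMax T h N ω}
  have hE (N : ℕ) : MeasurableSet (E N) :=
    measurableSet_lt measurable_const (measurable_birkhoffSumMax hT.measurable hhm N)
  have hEmono : Monotone E := fun N N' hN ω hω =>
    lt_of_lt_of_le hω ((partialSups (birkhoffSum T h · ω)).monotone hN)
  have hEae : ∀ᵐ ω ∂P, ω ∈ ⋃ N, E N := by
    filter_upwards [measure_eq_zero_iff_ae_notMem.1 hbdd] with ω hω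
    obtain ⟨_, ⟨N, rfl⟩, hN⟩ := not_bddAbove_iff.1 hω 0
    exact mem_iUnion.2 ⟨N, hN.trans_le (birkhoffSum_le_birkhoffSumMax le_rfl ω)⟩
  have hlim := tendsto_setIntegral_of_monotone hE hEmono hh.integrableOn
  rw [Measure.restrict_eq_self_of_ae_mem hEae] at hlim
  exact hneg.not_ge (ge_of_tendsto' hlim fun N =>
    setIntegral_birkhoffSumMax_pos_nonneg hT.toMeasurePreserving hhm hh N)

variable [IsProbabilityMeasure P]

lemma Ergodic.ae_eventually_birkhoffAverage_le (hT : Ergodic T P) (hhm : Measurable h)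
    (hh : Integrable h P) {c : ℝ} (hc : ∫ ω, h ω ∂P < c) :
    ∀ᵐ ω ∂P, ∀ᶠ n in atTop, birkhoffAverage ℝ T h n ω ≤ c := by
  obtain ⟨c', hhc', hc'c⟩ := exists_between hc
  have hneg : ∫ ω, h ω - c' ∂P < 0 := by
    rw [integral_sub hh (integrable_const c')]
    simp only [integral_const, probReal_univ, smul_eq_mul, one_mul]
    linarith
  filter_upwards [hT.ae_bddAbove_birkhoffSum (hhm.sub measurable_const)
    (hh.sub (integrable_const c')) hneg] with ω ⟨M, hM⟩
  have hsmall : ∀ᶠ n : ℕ in atTop, M / n < c - c' :=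
    (tendsto_const_div_atTop_nhds_zero_nat M).eventually (gt_mem_nhds (by linarith))
  filter_upwards [hsmall, eventually_gt_atTop 0] with n hn hn₀
  have hle : birkhoffSum T h n ω - n * c' ≤ M :=
    birkhoffSum_sub_const (T := T) c' n ω ▸ hM (mem_range_self n)
  have hn₀' : (0 : ℝ) < n := Nat.cast_pos.2 hn₀
  rw [birkhoffAverage, smul_eq_mul, inv_mul_le_iff₀ hn₀']
  rw [div_lt_iff₀ hn₀'] at hn
  linarith

lemma Ergodic.ae_forall_rat_eventually_birkhoffAverage_le (hT : Ergodic T P)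
    (hhm : Measurable h) (hh : Integrable h P) :
    ∀ᵐ ω ∂P, ∀ q : ℚ, ∫ ω, h ω ∂P < q → ∀ᶠ n in atTop, birkhoffAverage ℝ T h n ω ≤ q :=
  ae_all_iff.2 fun _ => eventually_imp_distrib_left.2 (hT.ae_eventually_birkhoffAverage_le hhm hh)

theorem Ergodic.ae_tendsto_birkhoffAverage (hT : Ergodic T P) (hhm : Measurable h)
    (hh : Integrable h P) :
    ∀ᵐ ω ∂P, Tendsto (birkhoffAverage ℝ T h · ω) atTop (𝓝 (∫ ω, h ω ∂P)) := by
  filter_upwards [hT.ae_forall_rat_eventually_birkhoffAverage_le hhm hh,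
    hT.ae_forall_rat_eventually_birkhoffAverage_le hhm.neg hh.neg] with ω hup hlo
  refine tendsto_order.2 ⟨fun a ha => ?_, fun b hb => ?_⟩
  · obtain ⟨q, haq, hq⟩ := exists_rat_btwn ha
    have hq' : ∫ ω, (-h) ω ∂P < ((-q : ℚ) : ℝ) := by
      simp only [Pi.neg_apply, integral_neg]; push_cast; linarith
    filter_upwards [hlo (-q) hq'] with n hn
    simp only [birkhoffAverage_neg, Pi.neg_apply, Rat.cast_neg, neg_le_neg_iff] at hn
    linarith
  · obtain ⟨q, hq, hqb⟩ := exists_rat_btwn hb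
    filter_upwards [hup q hq] with n hn using hn.trans_lt hqb

end Birkhoff

lemma IsLowerSet.subset_of_measureReal_lt {α : Type*} [LinearOrder α] [MeasurableSpace α]
    {ν : Measure α} [IsFiniteMeasure ν] {J K : Set α} (hJ : IsLowerSet J) (hK : IsLowerSet K)
    (h : ν.real J < ν.real K) : J ⊆ K :=
  (hJ.total hK).resolve_right fun hKJ => (measureReal_mono hKJ).not_gt h

lemma continuousAt_indicator_Iic_apply {x t₀ : ℝ} (hx : x ≠ t₀) :
    ContinuousAt (fun t => (Iic t).indicator (1 : ℝ → ℝ) x) t₀ := by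
  rcases hx.lt_or_gt with hlt | hgt
  · refine (continuousAt_const (y := (1 : ℝ))).congr ?_
    filter_upwards [Ioi_mem_nhds hlt] with t ht
    simp [(mem_Ioi.1 ht).le]
  · refine (continuousAt_const (y := (0 : ℝ))).congr ?_
    filter_upwards [Iio_mem_nhds hgt] with t ht
    simp [not_le.2 (mem_Iio.1 ht)]

open Classical in
/-- For `0 < z < ν univ` the `∃` holds by the intermediate value theorem, so `univ` only serves
the levels `z ≥ ν univ`. -/
noncomputable def lowerLevelSet (ν : Measure ℝ) (z : ℝ) : Set ℝ :=
  if z ≤ 0 then ∅ else if h : ∃ t, ν.real (Iic t) = z then Iic h.choose else univ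

lemma isLowerSet_lowerLevelSet (ν : Measure ℝ) (z : ℝ) : IsLowerSet (lowerLevelSet ν z) := by
  unfold lowerLevelSet
  split_ifs
  exacts [isLowerSet_empty, isLowerSet_Iic _, isLowerSet_univ]

section FiniteMeasureOnReal

variable {ν : Measure ℝ} [IsFiniteMeasure ν]

lemma continuous_measureReal_Iic [NullSingletonClass ν] :
    Continuous fun t => ν.real (Iic t) := by
  simp_rw [← integral_indicator_one measurableSet_Iic]
  refine continuous_iff_continuousAt.2 fun t₀ => continuousAt_of_dominated (bound := 1) ?_ ?_
    (integrable_const 1) ?_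
  · exact Eventually.of_forall fun t =>
      (stronglyMeasurable_const.indicator measurableSet_Iic).aestronglyMeasurable
  · exact Eventually.of_forall fun t => ae_of_all _ fun x =>
      (norm_indicator_le_norm_self _ _).trans_eq (by simp)
  · filter_upwards [measure_eq_zero_iff_ae_notMem.1 (measure_singleton t₀)] with x hx
    exact continuousAt_indicator_Iic_apply hx

lemma exists_measureReal_Iic_eq [NullSingletonClass ν] {z : ℝ} (hz₀ : 0 < z)
    (hz : z < ν.real univ) : ∃ t, ν.real (Iic t) = z := by
  have hbot : Tendsto (fun t => ν.real (Iic t)) atBot (𝓝 0) := by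
    have := tendsto_measure_iInter_atBot (μ := ν) (fun t => measurableSet_Iic.nullMeasurableSet)
      (fun _ _ => Iic_subset_Iic.2) ⟨0, measure_ne_top ν _⟩
    rw [iInter_Iic_eq_empty_iff.2 (not_bddBelow_iff.2 fun t => ⟨t - 1, by simp⟩),
      measure_empty] at this
    exact (ENNReal.tendsto_toReal ENNReal.zero_ne_top).comp this
  have htop : Tendsto (fun t => ν.real (Iic t)) atTop (𝓝 (ν.real univ)) :=
    (ENNReal.tendsto_toReal (measure_ne_top ν univ)).comp (tendsto_measure_Iic_atTop ν)
  obtain ⟨a, ha⟩ := (hbot.eventually (gt_mem_nhds hz₀)).exists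
  obtain ⟨b, hb⟩ := (htop.eventually (lt_mem_nhds hz)).exists
  exact intermediate_value_univ a b continuous_measureReal_Iic ⟨ha.le, hb.le⟩

lemma measureReal_lowerLevelSet [NullSingletonClass ν] (z : ℝ) :
    ν.real (lowerLevelSet ν z) = max 0 (min z (ν.real univ)) := by
  unfold lowerLevelSet
  split_ifs with hz h
  · simp [min_le_of_left_le hz]
  · have hzC : z ≤ ν.real univ := h.choose_spec ▸ measureReal_mono (subset_univ _)
    rw [h.choose_spec, min_eq_left hzC, max_eq_right (not_le.1 hz).le]
  · have : ν.real univ ≤ z := not_lt.1 fun hlt => h (exists_measureReal_Iic_eq (not_le.1 hz) hlt)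
    rw [min_eq_right this, max_eq_right measureReal_nonneg]

lemma measureReal_lowerLevelSet_sub_le [NullSingletonClass ν] {z₁ z₂ : ℝ} (h : z₁ ≤ z₂) :
    ν.real (lowerLevelSet ν z₂) - ν.real (lowerLevelSet ν z₁) ≤ z₂ - z₁ := by
  rw [measureReal_lowerLevelSet, measureReal_lowerLevelSet]
  simp only [max_def, min_def]
  split_ifs <;> linarith

lemma lowerLevelSet_subset [NullSingletonClass ν] {J : Set ℝ} (hJ : IsLowerSet J) {z : ℝ}
    (hz : z < ν.real J) : lowerLevelSet ν z ⊆ J := by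
  by_cases hz₀ : z ≤ 0
  · simp [lowerLevelSet, hz₀]
  refine (isLowerSet_lowerLevelSet ν z).subset_of_measureReal_lt (ν := ν) hJ ?_
  rw [measureReal_lowerLevelSet, max_eq_right (le_min (not_le.1 hz₀).le measureReal_nonneg)]
  exact (min_le_left _ _).trans_lt hz

lemma subset_lowerLevelSet {J : Set ℝ} (hJ : IsLowerSet J) {z : ℝ} (hz : ν.real J < z) :
    J ⊆ lowerLevelSet ν z := by
  have hz₀ : ¬z ≤ 0 := fun h => (measureReal_nonneg.trans_lt hz).not_ge h
  unfold lowerLevelSet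
  split_ifs with h
  · exact hJ.subset_of_measureReal_lt (ν := ν) (isLowerSet_Iic _) (h.choose_spec.symm ▸ hz)
  · exact subset_univ J

theorem eventually_forall_isLowerSet_abs_sub_le [NullSingletonClass ν] {E : ℕ → Set ℝ → ℝ}
    (hE : ∀ n, Monotone (E n))
    (hconv : ∀ q : ℚ, Tendsto (E · (lowerLevelSet ν q)) atTop (𝓝 (ν.real (lowerLevelSet ν q))))
    {ε : ℝ} (hε : 0 < ε) :
    ∀ᶠ n in atTop, ∀ J, IsLowerSet J → |E n J - ν.real J| ≤ ε := by
  obtain ⟨δ, hδ, hδε⟩ := exists_rat_btwn (div_pos hε three_pos)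
  set L : ℕ → Set ℝ := fun j => lowerLevelSet ν ((j - 1) * δ : ℚ)
  have hev : ∀ᶠ n in atTop, ∀ j ∈ Finset.range (⌊ν.real univ / δ⌋₊ + 3),
      |E n (L j) - ν.real (L j)| < δ :=
    (Finset.eventually_all _).2 fun j _ => by
      simpa [Real.dist_eq] using Metric.tendsto_nhds.1 (hconv _) δ hδ
  filter_upwards [hev] with n hn J hJ
  -- `J` lies between the levels `(k - 1) δ` and `(k + 1) δ`, where `k δ ≤ ν J < (k + 1) δ`.
  set k := ⌊ν.real J / δ⌋₊
  have hk : k * δ ≤ ν.real J :=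
    (le_div_iff₀ hδ).1 (Nat.floor_le (div_nonneg measureReal_nonneg hδ.le))
  have hk' : ν.real J < (k + 1) * δ := (div_lt_iff₀ hδ).1 (Nat.lt_floor_add_one _)
  have hkK : k ≤ ⌊ν.real univ / δ⌋₊ :=
    Nat.floor_le_floor (div_le_div_of_nonneg_right (measureReal_mono (subset_univ J)) hδ.le)
  have hA : L k ⊆ J := lowerLevelSet_subset hJ (by push_cast; linarith)
  have hB : J ⊆ L (k + 2) := subset_lowerLevelSet hJ (by push_cast; linarith)
  have hgap : ν.real (L (k + 2)) - ν.real (L k) ≤ 2 * δ := by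
    refine (measureReal_lowerLevelSet_sub_le (by push_cast; linarith)).trans_eq ?_
    push_cast
    ring
  have hEA := abs_lt.1 (hn k (Finset.mem_range.2 (by omega)))
  have hEB := abs_lt.1 (hn (k + 2) (Finset.mem_range.2 (by omega)))
  have hEA' := hE n hA
  have hEB' := hE n hB
  have hνA := measureReal_mono (μ := ν) hA
  have hνB := measureReal_mono (μ := ν) hB
  exact abs_le.2 ⟨by linarith, by linarith⟩

end FiniteMeasureOnReal

lemma Set.OrdConnected.isLowerSet_lowerClosure_sdiff {α : Type*} [Preorder α] {I : Set α}
    (hI : I.OrdConnected) : IsLowerSet ((lowerClosure I : Set α) \ I) :=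
  (lowerClosure I).lower.sdiff fun _ hb _ hc hcb =>
    let ⟨_, ha, hba⟩ := mem_lowerClosure.1 hb
    hI.out hc ha ⟨hcb, hba⟩

lemma measureReal_withDensity_ofReal {α : Type*} [MeasurableSpace α] {μ : Measure α} [SFinite μ]
    {w : α → ℝ} (hw₀ : 0 ≤ w) (hw : AEStronglyMeasurable w μ) (J : Set α) :
    (μ.withDensity fun x => ENNReal.ofReal (w x)).real J = ∫ x in J, w x ∂μ := by
  rw [measureReal_def, withDensity_apply', integral_eq_lintegral_of_nonneg_ae
    (ae_of_all _ fun x => hw₀ x) hw.restrict]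

section UniformErgodic

variable {Ω : Type*} [MeasurableSpace Ω] {P : Measure Ω} {T : Ω → Ω} {f : Ω → ℝ} {w : ℝ → ℝ}

def UniformErgodicOn (P : Measure Ω) (T : Ω → Ω) (f : Ω → ℝ) (w : ℝ → ℝ) (𝒞 : Set (Set ℝ)) :
    Prop :=
  ∀ᵐ ω ∂P, ∀ ε > 0, ∀ᶠ n in atTop, ∀ J ∈ 𝒞,
    |birkhoffAverage ℝ T (fun ω => J.indicator w (f ω)) n ω - ∫ x in J, w x ∂P.map f| ≤ ε

lemma UniformErgodicOn.sub {w' : ℝ → ℝ} {𝒞 : Set (Set ℝ)} (h : UniformErgodicOn P T f w 𝒞)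
    (h' : UniformErgodicOn P T f w' 𝒞) (hw : Integrable w (P.map f))
    (hw' : Integrable w' (P.map f)) : UniformErgodicOn P T f (w - w') 𝒞 := by
  filter_upwards [h, h'] with ω hω hω' ε hε
  filter_upwards [hω (ε / 2) (half_pos hε), hω' (ε / 2) (half_pos hε)] with n hn hn' J hJ
  have havg : birkhoffAverage ℝ T (fun ω => J.indicator (w - w') (f ω)) n ω =
      birkhoffAverage ℝ T (fun ω => J.indicator w (f ω)) n ω -
        birkhoffAverage ℝ T (fun ω => J.indicator w' (f ω)) n ω := by
    have : (fun ω => J.indicator (w - w') (f ω)) =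
        (fun ω => J.indicator w (f ω)) - fun ω => J.indicator w' (f ω) := by
      ext; simp [indicator_sub']
    rw [this, birkhoffAverage_sub]
    rfl
  rw [havg, integral_sub' hw.integrableOn hw'.integrableOn]
  have hb := abs_le.1 (hn J hJ)
  have hb' := abs_le.1 (hn' J hJ)
  exact abs_le.2 ⟨by linarith, by linarith⟩

lemma UniformErgodicOn.ordConnected (h : UniformErgodicOn P T f w {J | IsLowerSet J})
    (hw : Integrable w (P.map f)) : UniformErgodicOn P T f w {I | I.OrdConnected} := by
  filter_upwards [h] with ω hω ε hε
  filter_upwards [hω (ε / 2) (half_pos hε)] with n hn I hI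
  set J : Set ℝ := ↑(lowerClosure I)
  have hIJ : I ⊆ J := subset_lowerClosure
  have hind : I.indicator w = J.indicator w - (J \ I).indicator w := by
    rw [indicator_sdiff hIJ, sub_sub_cancel]
  have havg : birkhoffAverage ℝ T (fun ω => I.indicator w (f ω)) n ω =
      birkhoffAverage ℝ T (fun ω => J.indicator w (f ω)) n ω -
        birkhoffAverage ℝ T (fun ω => (J \ I).indicator w (f ω)) n ω := by
    rw [hind]
    exact congrFun (congrFun birkhoffAverage_sub n) ω
  rw [havg, ← sub_sub_cancel (∫ x in J, w x ∂P.map f) (∫ x in I, w x ∂P.map f),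
    ← setIntegral_sdiff hI.measurableSet hw.integrableOn hIJ]
  have hb := abs_le.1 (hn J (lowerClosure I).lower)
  have hb' := abs_le.1 (hn (J \ I) hI.isLowerSet_lowerClosure_sdiff)
  exact abs_le.2 ⟨by linarith, by linarith⟩

variable [IsProbabilityMeasure P]

theorem uniformErgodicOn_isLowerSet_of_nonneg (hT : Ergodic T P) (hf : Measurable f)
    [NullSingletonClass (P.map f)] (hwm : Measurable w) (hw₀ : 0 ≤ w)
    (hw : Integrable w (P.map f)) : UniformErgodicOn P T f w {J | IsLowerSet J} := by
  set ν := (P.map f).withDensity fun x => ENNReal.ofReal (w x)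
  have : IsFiniteMeasure ν := isFiniteMeasure_withDensity_ofReal hw.2
  have hν (J : Set ℝ) : ν.real J = ∫ x in J, w x ∂P.map f :=
    measureReal_withDensity_ofReal hw₀ hw.aestronglyMeasurable J
  have hconv : ∀ᵐ ω ∂P, ∀ q : ℚ, Tendsto
      (fun n => birkhoffAverage ℝ T (fun ω => (lowerLevelSet ν q).indicator w (f ω)) n ω) atTop
      (𝓝 (ν.real (lowerLevelSet ν q))) := ae_all_iff.2 fun q => by
    have hL := (isLowerSet_lowerLevelSet ν q).ordConnected.measurableSet
    have hgm : Measurable ((lowerLevelSet ν q).indicator w) := hwm.indicator hL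
    rw [hν, ← integral_indicator hL, integral_map hf.aemeasurable hgm.aestronglyMeasurable]
    exact hT.ae_tendsto_birkhoffAverage (hgm.comp hf) ((hw.indicator hL).comp_measurable hf)
  filter_upwards [hconv] with ω hω ε hε
  have hmono (n : ℕ) : Monotone fun J : Set ℝ =>
      birkhoffAverage ℝ T (fun ω => J.indicator w (f ω)) n ω := fun J J' hJJ' =>
    birkhoffAverage_mono (fun ω => indicator_le_indicator_of_subset hJJ' (fun x => hw₀ x) _) n ω
  filter_upwards [eventually_forall_isLowerSet_abs_sub_le hmono hω hε] with n hn J hJ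
  exact hν J ▸ hn J hJ

theorem uniformErgodicOn_ordConnected (hT : Ergodic T P) (hf : Measurable f)
    [NullSingletonClass (P.map f)] (hwm : Measurable w) (hw : Integrable w (P.map f)) :
    UniformErgodicOn P T f w {I | I.OrdConnected} := by
  have hpos := uniformErgodicOn_isLowerSet_of_nonneg hT hf hwm.posPart
    (fun x => posPart_nonneg (w x)) hw.pos_part
  have hneg := uniformErgodicOn_isLowerSet_of_nonneg hT hf hwm.negPart
    (fun x => negPart_nonneg (w x)) hw.neg_part
  have := hpos.sub hneg hw.pos_part hw.neg_part
  rw [show ((fun x => (w x)⁺) - fun x => (w x)⁻) = w from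
    funext fun x => posPart_sub_negPart (w x)] at this
  exact this.ordConnected hw

end UniformErgodic

lemma abs_pow_le_one_add_sq (x : ℝ) {a : ℕ} (ha : a ≤ 2) : |x ^ a| ≤ 1 + x ^ 2 := by
  interval_cases a
  · simp [sq_nonneg]
  · simp only [pow_one]; nlinarith [sq_abs x, sq_nonneg (|x| - 1)]
  · simp [abs_of_nonneg (sq_nonneg x)]

/-- Glivenko–Cantelli-type uniform ergodic theorem over intervals: for a stationary ergodic
real sequence `Y_i = f ∘ T^(i-1)` with atomless marginal `μ` of finite second moment, the
empirical averages of `x ↦ x^a 1_I(x)` (for `a = 0, 1, 2`) converge to their expectations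
uniformly over all intervals `I`, almost surely. -/
theorem ergodic_unif_intervals
    {Ω : Type*} [MeasurableSpace Ω] (P : Measure Ω) [IsProbabilityMeasure P]
    (T : Ω → Ω) (hT : Ergodic T P)
    (f : Ω → ℝ) (hf : Measurable f)
    (hatomless : ∀ x : ℝ, P.map f {x} = 0)
    (hmom : Integrable (fun x => x ^ 2) (P.map f))
    (a : ℕ) (ha : a ≤ 2) :
    ∀ᵐ ω ∂P, ∀ ε > (0 : ℝ), ∀ᶠ n : ℕ in atTop, ∀ I : Set ℝ, I.OrdConnected →
      |(1 / (n : ℝ)) * ∑ i ∈ Finset.range n,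
          (f (T^[i] ω)) ^ a * I.indicator (fun _ => (1 : ℝ)) (f (T^[i] ω))
        - ∫ x, x ^ a * I.indicator (fun _ => (1 : ℝ)) x ∂(P.map f)| ≤ ε := by
  have : NullSingletonClass (P.map f) := ⟨hatomless⟩
  have hw : Integrable (fun x : ℝ => x ^ a) (P.map f) :=
    ((integrable_const 1).add hmom).mono' (by fun_prop)
      (ae_of_all _ fun x => abs_pow_le_one_add_sq x ha)
  have hind (I : Set ℝ) (x : ℝ) :
      x ^ a * I.indicator (fun _ => (1 : ℝ)) x = I.indicator (· ^ a) x := by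
    by_cases hx : x ∈ I <;> simp [hx]
  filter_upwards [uniformErgodicOn_ordConnected hT hf (by fun_prop) hw] with ω hω ε hε
  filter_upwards [hω ε hε] with n hn I hI
  simp only [hind, integral_indicator hI.measurableSet, one_div]
  exact hn I hI
end

section
/- Let μ be an atomless probability measure on ℝ with ∫ x² dμ(x) < ∞, let a ∈ {0, 1, 2}, and let ε > 0. Then there exists a finite family 𝒥 of intervals of ℝ such that for every interval I ⊆ ℝ there exist J₁, J₂ ∈ 𝒥 with x^a · 1_{J₁}(x) ≤ x^a · 1_I(x) ≤ x^a · 1_{J₂}(x) for all x ∈ ℝ, and ∫ x^a (1_{J₂}(x) − 1_{J₁}(x)) dμ(x) ≤ ε. -/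
/-!
The weight `|x|^a` is `μ`-integrable (it is at most `1 + x²`), so `ν = |x|^a μ` is a finite
atomless measure. Its distribution function is continuous, hence takes every value `k ε/2` below
its total mass, and the corresponding points cut `ℝ` into finitely many cells of `ν`-mass at most
`ε/2`. Add the point `0` where `x^a` changes sign (`⊥` when `a` is even) and let `𝒥` consist of
all intervals with endpoints in this grid. Each endpoint of `I` is rounded to the grid, inwards or
outwards according to the sign of `x^a` next to it, so that `J₁ ⊆ I ⊆ J₂` where `x^a > 0` and
`J₂ ⊆ I ⊆ J₁` where `x^a < 0`. Then `J₁ ∆ J₂` lies in the two cells containing the endpoints of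
`I`, and `∫ x^a (1_{J₂} - 1_{J₁}) dμ ≤ ν (J₁ ∆ J₂) ≤ ε`.
-/

open MeasureTheory Set Filter Topology
open scoped symmDiff

namespace MeasureTheory

variable {ν : Measure ℝ} [IsFiniteMeasure ν]

theorem tendsto_measureReal_Iic_atBot : Tendsto (fun t => ν.real (Iic t)) atBot (𝓝 0) := by
  have h := tendsto_measure_iInter_atBot (μ := ν) (fun t => measurableSet_Iic.nullMeasurableSet)
    monotone_Iic ⟨0, measure_ne_top ν _⟩
  rw [iInter_Iic_eq_empty_iff.2 (by simp), measure_empty] at h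
  exact (ENNReal.tendsto_toReal ENNReal.zero_ne_top).comp h

theorem tendsto_measureReal_Iic_atTop :
    Tendsto (fun t => ν.real (Iic t)) atTop (𝓝 (ν.real univ)) :=
  (ENNReal.tendsto_toReal (measure_ne_top ν _)).comp (tendsto_measure_Iic_atTop ν)

theorem continuous_measureReal_Iic [NullSingletonClass ν] :
    Continuous fun t => ν.real (Iic t) := by
  refine continuous_iff_continuousAt.2 fun t => ?_
  have h := (integrableOn_const (μ := ν) (s := Iic (t + 1)) (C := (1 : ℝ))
    (measure_ne_top ν _)).continuousOn_Iic_primitive_Iic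
  simp only [setIntegral_const, smul_eq_mul, mul_one] at h
  exact h.continuousAt (Iic_mem_nhds (lt_add_one t))

theorem exists_measureReal_Iic_eq [NullSingletonClass ν] {c : ℝ}
    (hc : c ∈ Ioo 0 (ν.real univ)) : ∃ t, ν.real (Iic t) = c := by
  obtain ⟨a, ha⟩ := ((tendsto_measureReal_Iic_atBot (ν := ν)).eventually_lt_const hc.1).exists
  obtain ⟨b, hb⟩ := ((tendsto_measureReal_Iic_atTop (ν := ν)).eventually_const_lt hc.2).exists
  exact intermediate_value_univ a b continuous_measureReal_Iic ⟨ha.le, hb.le⟩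

theorem measureReal_preimage_Icc_le [NullSingletonClass ν] {a b : EReal} (hab : a ≤ b) :
    ν.real ((↑) ⁻¹' Icc a b) ≤ ν.real ((↑) ⁻¹' Iic b) - ν.real ((↑) ⁻¹' Iic a) := by
  have hsub : ((↑) ⁻¹' Icc a b : Set ℝ) ⊆ ((↑) ⁻¹' Iic b \ (↑) ⁻¹' Iic a) ∪ (↑) ⁻¹' {a} := by
    rintro x ⟨hax, hxb⟩
    rcases hax.lt_or_eq with h | h
    · exact Or.inl ⟨hxb, not_le.2 h⟩
    · exact Or.inr h.symm
  have hnull : ν.real ((↑) ⁻¹' {a} : Set ℝ) = 0 := by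
    simp [measureReal_def, (subsingleton_singleton.preimage EReal.coe_injective).measure_zero ν]
  calc ν.real ((↑) ⁻¹' Icc a b)
      ≤ ν.real ((↑) ⁻¹' Iic b \ (↑) ⁻¹' Iic a) + ν.real ((↑) ⁻¹' {a} : Set ℝ) :=
        (measureReal_mono hsub).trans (measureReal_union_le _ _)
    _ = ν.real ((↑) ⁻¹' Iic b) - ν.real ((↑) ⁻¹' Iic a) := by
      rw [hnull, add_zero, measureReal_sdiff (preimage_mono (Iic_subset_Iic.2 hab))
        (measurableSet_Iic.preimage measurable_coe_real_ereal)]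

theorem exists_finset_measureReal_preimage_Icc_le [NullSingletonClass ν] {δ : ℝ} (hδ : 0 < δ) :
    ∃ T : Finset ℝ, ∀ a b : EReal, (∀ t ∈ T, (t : EReal) ∉ Ioo a b) →
      ν.real ((↑) ⁻¹' Icc a b) ≤ δ := by
  set M := ν.real univ
  set G : EReal → ℝ := fun r => ν.real ((↑) ⁻¹' Iic r)
  have hG_mono : Monotone G := fun r s h => measureReal_mono (preimage_mono (Iic_subset_Iic.2 h))
  have hG_coe (t : ℝ) : G t = ν.real (Iic t) := by
    simp only [G]; congr 1; ext x; simp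
  choose! τ hτ using fun c (hc : c ∈ Ioo 0 M) => exists_measureReal_Iic_eq hc
  refine ⟨(Finset.range ⌈M / δ⌉₊).image fun k : ℕ => τ (k * δ), fun a b hgap => ?_⟩
  rcases lt_or_ge b a with hba | hab
  · simp [Icc_eq_empty_of_lt hba, hδ.le]
  -- The first level `n δ` above `G a` is either `≥ M` or attained at a grid point `≥ b`.
  set n : ℕ := ⌊G a / δ⌋₊ + 1
  have hn : G a < n * δ := by
    push_cast [n]; exact (div_lt_iff₀ hδ).1 (Nat.lt_floor_add_one _)
  have hn' : n * δ ≤ G a + δ := by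
    have : (⌊G a / δ⌋₊ : ℝ) * δ ≤ G a :=
      (le_div_iff₀ hδ).1 (Nat.floor_le (div_nonneg measureReal_nonneg hδ.le))
    push_cast [n]; linarith
  have hGb : G b ≤ n * δ := by
    rcases lt_or_ge (n * δ) M with hM | hM
    · have hmem : τ (n * δ) ∈ (Finset.range ⌈M / δ⌉₊).image fun k : ℕ => τ (k * δ) :=
        Finset.mem_image_of_mem _ (Finset.mem_range.2 (Nat.lt_ceil.2 ((lt_div_iff₀ hδ).2 hM)))
      have hGt : G (τ (n * δ)) = n * δ := (hG_coe _).trans (hτ _ ⟨by positivity, hM⟩)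
      have hat : a < τ (n * δ) := lt_of_not_ge fun h => by linarith [hG_mono h]
      exact (hG_mono (not_lt.1 fun h => hgap _ hmem ⟨hat, h⟩)).trans hGt.le
    · exact (measureReal_mono (subset_univ _)).trans hM
  calc ν.real ((↑) ⁻¹' Icc a b) ≤ G b - G a := measureReal_preimage_Icc_le hab
    _ ≤ δ := by linarith

end MeasureTheory

section Rounding

variable {α : Type*} [LinearOrder α] [BoundedOrder α] (S : Finset α) {r s c : α}

def roundDown (r : α) : α := (S.filter (· ≤ r)).sup id

def roundUp (r : α) : α := (S.filter (r ≤ ·)).inf id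

def gridCell (r : α) : Set α := Icc (roundDown S r) (roundUp S r)

open Classical in
noncomputable def lowerRays : Finset (Set α) :=
  (insert ⊥ S).image Ici ∪ (insert ⊤ S).image Ioi

open Classical in
noncomputable def upperRays : Finset (Set α) :=
  (insert ⊤ S).image Iic ∪ (insert ⊥ S).image Iio

variable {S}

theorem roundDown_le : roundDown S r ≤ r :=
  Finset.sup_le fun _ hs => (Finset.mem_filter.1 hs).2

theorem le_roundUp : r ≤ roundUp S r :=
  Finset.le_inf fun _ hs => (Finset.mem_filter.1 hs).2

theorem le_roundDown (hs : s ∈ S) (h : s ≤ r) : s ≤ roundDown S r :=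
  Finset.le_sup (f := id) (Finset.mem_filter.2 ⟨hs, h⟩)

theorem roundUp_le (hs : s ∈ S) (h : r ≤ s) : roundUp S r ≤ s :=
  Finset.inf_le (f := id) (Finset.mem_filter.2 ⟨hs, h⟩)

theorem roundDown_mem (r : α) : roundDown S r ∈ insert ⊥ S := by
  rcases (S.filter (· ≤ r)).eq_empty_or_nonempty with h | h
  · simp [roundDown, h]
  · obtain ⟨s, hs, he⟩ := Finset.exists_mem_eq_sup _ h id
    rw [roundDown, he]
    exact Finset.mem_insert_of_mem (Finset.mem_filter.1 hs).1

theorem roundUp_mem (r : α) : roundUp S r ∈ insert ⊤ S := by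
  rcases (S.filter (r ≤ ·)).eq_empty_or_nonempty with h | h
  · simp [roundUp, h]
  · obtain ⟨s, hs, he⟩ := Finset.exists_mem_eq_inf _ h id
    rw [roundUp, he]
    exact Finset.mem_insert_of_mem (Finset.mem_filter.1 hs).1

theorem notMem_Ioo_roundDown_roundUp (hs : s ∈ S) : s ∉ Ioo (roundDown S r) (roundUp S r) :=
  fun h => (le_total s r).elim (fun h' => (le_roundDown hs h').not_gt h.1)
    fun h' => (roundUp_le hs h').not_gt h.2

theorem Ici_roundDown_mem_lowerRays (r : α) : Ici (roundDown S r) ∈ lowerRays S := by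
  classical
  exact Finset.mem_union_left _ (Finset.mem_image_of_mem _ (roundDown_mem r))

theorem Ioi_roundUp_mem_lowerRays (r : α) : Ioi (roundUp S r) ∈ lowerRays S := by
  classical
  exact Finset.mem_union_right _ (Finset.mem_image_of_mem _ (roundUp_mem r))

theorem Iic_roundUp_mem_upperRays (r : α) : Iic (roundUp S r) ∈ upperRays S := by
  classical
  exact Finset.mem_union_left _ (Finset.mem_image_of_mem _ (roundUp_mem r))

theorem Iio_roundDown_mem_upperRays (r : α) : Iio (roundDown S r) ∈ upperRays S := by
  classical
  exact Finset.mem_union_right _ (Finset.mem_image_of_mem _ (roundDown_mem r))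

theorem ordConnected_of_mem_lowerRays {L : Set α} (hL : L ∈ lowerRays S) : L.OrdConnected := by
  classical
  simp only [lowerRays, Finset.mem_union, Finset.mem_image] at hL
  rcases hL with ⟨_, _, rfl⟩ | ⟨_, _, rfl⟩ <;> infer_instance

theorem ordConnected_of_mem_upperRays {U : Set α} (hU : U ∈ upperRays S) : U.OrdConnected := by
  classical
  simp only [upperRays, Finset.mem_union, Finset.mem_image] at hU
  rcases hU with ⟨_, _, rfl⟩ | ⟨_, _, rfl⟩ <;> infer_instance

/-- `c` is the point where the weight changes sign: `L₁` is the lower end of the lower bracket and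
`L₂` that of the upper bracket. -/
theorem exists_lowerRays_bracket (hc : c ∈ S) (p : α) :
    ∃ L₁ ∈ lowerRays S, ∃ L₂ ∈ lowerRays S,
      L₁ ∈ Icc (Ioi (roundUp S p)) (Ici (roundDown S p)) ∧
      L₂ ∈ Icc (Ioi (roundUp S p)) (Ici (roundDown S p)) ∧
      L₁ ∩ Ioi c ⊆ Ioi p ∧ Ici p ∩ Iio c ⊆ L₁ ∧ Ici p ∩ Ioi c ⊆ L₂ ∧ L₂ ∩ Iio c ⊆ Ioi p := by
  have hin : Ioi (roundUp S p) ∈ Icc (Ioi (roundUp S p)) (Ici (roundDown S p)) :=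
    ⟨le_rfl, Ioi_subset_Ici (roundDown_le.trans le_roundUp)⟩
  have hout : Ici (roundDown S p) ∈ Icc (Ioi (roundUp S p)) (Ici (roundDown S p)) :=
    ⟨Ioi_subset_Ici (roundDown_le.trans le_roundUp), le_rfl⟩
  rcases le_or_gt c p with hcp | hpc
  · refine ⟨_, Ioi_roundUp_mem_lowerRays p, _, Ici_roundDown_mem_lowerRays p, hin, hout,
      ?_, ?_, ?_, ?_⟩
    · rintro y ⟨hy, -⟩; exact le_roundUp.trans_lt hy
    · rintro y ⟨hpy, hyc⟩; exact absurd (hcp.trans hpy) (not_le.2 hyc)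
    · rintro y ⟨hpy, -⟩; exact roundDown_le.trans hpy
    · rintro y ⟨hy, hyc⟩; exact absurd ((le_roundDown hc hcp).trans hy) (not_le.2 hyc)
  · refine ⟨_, Ici_roundDown_mem_lowerRays p, _, Ioi_roundUp_mem_lowerRays p, hout, hin,
      ?_, ?_, ?_, ?_⟩
    · rintro y ⟨-, hcy⟩; exact hpc.trans hcy
    · rintro y ⟨hpy, -⟩; exact roundDown_le.trans hpy
    · rintro y ⟨-, hcy⟩; exact (roundUp_le hc hpc.le).trans_lt hcy
    · rintro y ⟨hy, -⟩; exact le_roundUp.trans_lt hy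

theorem exists_upperRays_bracket (hc : c ∈ S) (q : α) :
    ∃ U₁ ∈ upperRays S, ∃ U₂ ∈ upperRays S,
      U₁ ∈ Icc (Iio (roundDown S q)) (Iic (roundUp S q)) ∧
      U₂ ∈ Icc (Iio (roundDown S q)) (Iic (roundUp S q)) ∧
      U₁ ∩ Ioi c ⊆ Iio q ∧ Iic q ∩ Iio c ⊆ U₁ ∧ Iic q ∩ Ioi c ⊆ U₂ ∧ U₂ ∩ Iio c ⊆ Iio q := by
  have hin : Iio (roundDown S q) ∈ Icc (Iio (roundDown S q)) (Iic (roundUp S q)) :=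
    ⟨le_rfl, Iio_subset_Iic (roundDown_le.trans le_roundUp)⟩
  have hout : Iic (roundUp S q) ∈ Icc (Iio (roundDown S q)) (Iic (roundUp S q)) :=
    ⟨Iio_subset_Iic (roundDown_le.trans le_roundUp), le_rfl⟩
  rcases le_or_gt q c with hqc | hcq
  · refine ⟨_, Iic_roundUp_mem_upperRays q, _, Iio_roundDown_mem_upperRays q, hout, hin,
      ?_, ?_, ?_, ?_⟩
    · rintro y ⟨hy, hcy⟩; exact absurd (hy.trans (roundUp_le hc hqc)) (not_le.2 hcy)
    · rintro y ⟨hyq, -⟩; exact hyq.trans le_roundUp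
    · rintro y ⟨hyq, hcy⟩; exact absurd (hyq.trans hqc) (not_le.2 hcy)
    · rintro y ⟨hy, -⟩; exact hy.trans_le roundDown_le
  · refine ⟨_, Iio_roundDown_mem_upperRays q, _, Iic_roundUp_mem_upperRays q, hin, hout,
      ?_, ?_, ?_, ?_⟩
    · rintro y ⟨hy, -⟩; exact hy.trans_le roundDown_le
    · rintro y ⟨-, hyc⟩; exact hyc.trans_le (le_roundDown hc hcq.le)
    · rintro y ⟨hyq, -⟩; exact hyq.trans le_roundUp
    · rintro y ⟨-, hyc⟩; exact hyc.trans hcq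

end Rounding

theorem Set.inter_symmDiff_inter_subset {α : Type*} [LinearOrder α] {a a' b b' : α}
    {L₁ L₂ U₁ U₂ : Set α} (hL₁ : L₁ ∈ Icc (Ioi a') (Ici a)) (hL₂ : L₂ ∈ Icc (Ioi a') (Ici a))
    (hU₁ : U₁ ∈ Icc (Iio b) (Iic b')) (hU₂ : U₂ ∈ Icc (Iio b) (Iic b')) :
    (L₁ ∩ U₁) ∆ (L₂ ∩ U₂) ⊆ Icc a a' ∪ Icc b b' := by
  have key : ∀ x ∈ Ici a ∩ Iic b', x ∉ Ioi a' ∩ Iio b → x ∈ Icc a a' ∪ Icc b b' := by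
    rintro x ⟨hax, hxb⟩ hx
    simp only [mem_inter_iff, mem_Ioi, mem_Iio, not_and_or, not_lt] at hx
    exact hx.imp (fun h => ⟨hax, h⟩) fun h => ⟨h, hxb⟩
  rintro x (⟨hx, hx'⟩ | ⟨hx, hx'⟩)
  · exact key x (inter_subset_inter hL₁.2 hU₁.2 hx) fun h => hx' (inter_subset_inter hL₂.1 hU₂.1 h)
  · exact key x (inter_subset_inter hL₂.2 hU₂.2 hx) fun h => hx' (inter_subset_inter hL₁.1 hU₁.1 h)

theorem Set.OrdConnected.preimage_coe_Ioo_sInf_sSup_subset {I : Set ℝ} (hI : I.OrdConnected) :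
    (↑) ⁻¹' Ioo (sInf ((↑) '' I : Set EReal)) (sSup ((↑) '' I)) ⊆ I := by
  rintro x ⟨hpx, hxq⟩
  obtain ⟨_, ⟨y, hy, rfl⟩, hyx⟩ := sInf_lt_iff.1 hpx
  obtain ⟨_, ⟨z, hz, rfl⟩, hxz⟩ := lt_sSup_iff.1 hxq
  exact hI.out hy hz ⟨(EReal.coe_lt_coe_iff.1 hyx).le, (EReal.coe_lt_coe_iff.1 hxz).le⟩

theorem Set.subset_preimage_coe_Icc_sInf_sSup (I : Set ℝ) :
    I ⊆ (↑) ⁻¹' Icc (sInf ((↑) '' I : Set EReal)) (sSup ((↑) '' I)) := fun _ hx =>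
  ⟨sInf_le (mem_image_of_mem _ hx), le_sSup (mem_image_of_mem _ hx)⟩

open Classical in
noncomputable def gridIntervals (S : Finset EReal) : Finset (Set ℝ) :=
  (lowerRays S ×ˢ upperRays S).image fun LU => (↑) ⁻¹' (LU.1 ∩ LU.2)

theorem preimage_mem_gridIntervals {S : Finset EReal} {L U : Set EReal}
    (hL : L ∈ lowerRays S) (hU : U ∈ upperRays S) : (↑) ⁻¹' (L ∩ U) ∈ gridIntervals S := by
  classical
  exact Finset.mem_image_of_mem (fun LU : Set EReal × Set EReal => ((↑) : ℝ → EReal) ⁻¹'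
    (LU.1 ∩ LU.2)) (Finset.mem_product.2 ⟨hL, hU⟩ : (L, U) ∈ _)

theorem ordConnected_of_mem_gridIntervals {S : Finset EReal} {J : Set ℝ}
    (hJ : J ∈ gridIntervals S) : J.OrdConnected := by
  classical
  obtain ⟨⟨L, U⟩, hLU, rfl⟩ := Finset.mem_image.1 hJ
  rw [Finset.mem_product] at hLU
  exact ((ordConnected_of_mem_lowerRays hLU.1).inter
    (ordConnected_of_mem_upperRays hLU.2)).preimage_mono EReal.coe_strictMono.monotone

theorem mul_indicator_le_mul_indicator {α : Type*} {g : α → ℝ} {J I : Set α}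
    (hpos : ∀ x ∈ J, 0 < g x → x ∈ I) (hneg : ∀ x ∈ I, g x < 0 → x ∈ J) (x : α) :
    g x * J.indicator (fun _ => 1) x ≤ g x * I.indicator (fun _ => 1) x := by
  by_cases hJ : x ∈ J <;> by_cases hI : x ∈ I <;>
    simp only [indicator_of_mem, indicator_of_notMem, hJ, hI, not_false_eq_true, mul_one,
      mul_zero, le_refl]
  · exact not_lt.1 fun h => hI (hpos x hJ h)
  · exact not_lt.1 fun h => hJ (hneg x hI h)

theorem exists_bracket_mem_gridIntervals {S : Finset EReal} {c : EReal} (hc : c ∈ S)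
    {g : ℝ → ℝ} (hpos : ∀ x : ℝ, 0 < g x → c < x) (hneg : ∀ x : ℝ, g x < 0 → (x : EReal) < c)
    {I : Set ℝ} (hI : I.OrdConnected) :
    ∃ J₁ ∈ gridIntervals S, ∃ J₂ ∈ gridIntervals S,
      (∀ x, g x * J₁.indicator (fun _ => 1) x ≤ g x * I.indicator (fun _ => 1) x ∧
        g x * I.indicator (fun _ => 1) x ≤ g x * J₂.indicator (fun _ => 1) x) ∧
      J₁ ∆ J₂ ⊆ (↑) ⁻¹' (gridCell S (sInf ((↑) '' I)) ∪ gridCell S (sSup ((↑) '' I))) := by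
  obtain ⟨L₁, hL₁, L₂, hL₂, hL₁r, hL₂r, hL₁p, hL₁n, hL₂p, hL₂n⟩ :=
    exists_lowerRays_bracket hc (sInf ((↑) '' I))
  obtain ⟨U₁, hU₁, U₂, hU₂, hU₁r, hU₂r, hU₁p, hU₁n, hU₂p, hU₂n⟩ :=
    exists_upperRays_bracket hc (sSup ((↑) '' I))
  have hIoo := hI.preimage_coe_Ioo_sInf_sSup_subset
  have hIcc := subset_preimage_coe_Icc_sInf_sSup I
  refine ⟨_, preimage_mem_gridIntervals hL₁ hU₁, _, preimage_mem_gridIntervals hL₂ hU₂,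
    fun x => ⟨?_, ?_⟩, ?_⟩
  · refine mul_indicator_le_mul_indicator (fun y hy hgy => hIoo ?_) (fun y hy hgy => ?_) x
    · exact ⟨hL₁p ⟨hy.1, hpos y hgy⟩, hU₁p ⟨hy.2, hpos y hgy⟩⟩
    · exact ⟨hL₁n ⟨(hIcc hy).1, hneg y hgy⟩, hU₁n ⟨(hIcc hy).2, hneg y hgy⟩⟩
  · refine mul_indicator_le_mul_indicator (fun y hy hgy => ?_) (fun y hy hgy => hIoo ?_) x
    · exact ⟨hL₂p ⟨(hIcc hy).1, hpos y hgy⟩, hU₂p ⟨(hIcc hy).2, hpos y hgy⟩⟩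
    · exact ⟨hL₂n ⟨hy.1, hneg y hgy⟩, hU₂n ⟨hy.2, hneg y hgy⟩⟩
  · rw [← preimage_symmDiff]
    exact preimage_mono (inter_symmDiff_inter_subset hL₁r hL₂r hU₁r hU₂r)

theorem integral_mul_indicator_sub_le_measureReal_withDensity {α : Type*} [MeasurableSpace α]
    {μ : Measure α} {g : α → ℝ} (hg : Integrable g μ) {J₁ J₂ D : Set α}
    (h₁ : MeasurableSet J₁) (h₂ : MeasurableSet J₂) (hD : MeasurableSet D) (hJD : J₁ ∆ J₂ ⊆ D) :
    ∫ x, g x * (J₂.indicator (fun _ => 1) x - J₁.indicator (fun _ => 1) x) ∂μ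
      ≤ (μ.withDensity fun x => ENNReal.ofReal |g x|).real D := by
  classical
  have hsub : (fun x => g x * (J₂.indicator (fun _ => 1) x - J₁.indicator (fun _ => 1) x))
      = fun x => J₂.indicator g x - J₁.indicator g x := by
    ext x
    simp only [indicator_apply]
    split_ifs <;> ring
  have hpt (x : α) : J₂.indicator g x - J₁.indicator g x ≤ D.indicator (fun x => |g x|) x := by
    by_cases hx : x ∈ D
    · simp only [indicator_apply, hx, if_true]
      split_ifs <;> linarith [le_abs_self (g x), neg_abs_le (g x), abs_nonneg (g x)]
    · have : x ∈ J₁ ↔ x ∈ J₂ := by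
        by_contra h
        exact hx (hJD (by rw [mem_symmDiff]; tauto))
      simp [indicator_apply, hx, this]
  calc ∫ x, g x * (J₂.indicator (fun _ => 1) x - J₁.indicator (fun _ => 1) x) ∂μ
      ≤ ∫ x, D.indicator (fun x => |g x|) x ∂μ := by
        rw [hsub]
        exact integral_mono ((hg.indicator h₂).sub (hg.indicator h₁)) (hg.abs.indicator hD) hpt
    _ = (μ.withDensity fun x => ENNReal.ofReal |g x|).real D := by
      rw [integral_indicator hD, measureReal_def, withDensity_apply _ hD,
        ← ofReal_integral_eq_lintegral_ofReal hg.abs.integrableOn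
          (ae_of_all _ fun _ => abs_nonneg _),
        ENNReal.toReal_ofReal (setIntegral_nonneg hD fun _ _ => abs_nonneg _)]

theorem integrable_pow_of_le_two {μ : Measure ℝ} [IsFiniteMeasure μ]
    (hmom : Integrable (fun x => x ^ 2) μ) {a : ℕ} (ha : a ≤ 2) :
    Integrable (fun x : ℝ => x ^ a) μ := by
  refine ((integrable_const 1).add hmom).mono' (continuous_pow a).aestronglyMeasurable
    (ae_of_all _ fun x => ?_)
  rw [Real.norm_eq_abs, abs_pow]
  interval_cases a <;> simp <;> nlinarith [abs_nonneg x, sq_abs x]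

theorem exists_sign_threshold_pow (a : ℕ) :
    ∃ c : EReal, (c = ⊥ ∨ c = 0) ∧
      ∀ x : ℝ, (0 < x ^ a → c < x) ∧ (x ^ a < 0 → (x : EReal) < c) := by
  rcases Nat.even_or_odd a with ha | ha
  · exact ⟨⊥, Or.inl rfl, fun x =>
      ⟨fun _ => EReal.bot_lt_coe x, fun h => absurd h (not_lt.2 (ha.pow_nonneg x))⟩⟩
  · exact ⟨0, Or.inr rfl, fun x => ⟨fun h => EReal.coe_pos.2 (ha.pow_pos_iff.1 h),
      fun h => EReal.coe_neg'.2 (ha.pow_neg_iff.1 h)⟩⟩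

/-- Bracketing lemma: for an atomless probability measure `μ` on `ℝ` with finite second
moment, `a ∈ {0, 1, 2}` and `ε > 0`, there is a finite family of intervals bracketing, in
`L¹(μ)`-distance `ε`, all the functions `x ↦ x^a 1_I(x)` for `I` an arbitrary interval. -/
theorem bracketing_intervals
    (μ : Measure ℝ) [IsProbabilityMeasure μ] [NullSingletonClass μ]
    (hmom : Integrable (fun x => x ^ 2) μ)
    (a : ℕ) (ha : a ≤ 2) (ε : ℝ) (hε : 0 < ε) :
    ∃ 𝒥 : Finset (Set ℝ), (∀ J ∈ 𝒥, J.OrdConnected) ∧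
      ∀ I : Set ℝ, I.OrdConnected →
        ∃ J₁ ∈ 𝒥, ∃ J₂ ∈ 𝒥,
          (∀ x : ℝ, x ^ a * J₁.indicator (fun _ => (1 : ℝ)) x
              ≤ x ^ a * I.indicator (fun _ => (1 : ℝ)) x ∧
            x ^ a * I.indicator (fun _ => (1 : ℝ)) x
              ≤ x ^ a * J₂.indicator (fun _ => (1 : ℝ)) x) ∧
          ∫ x, x ^ a * (J₂.indicator (fun _ => (1 : ℝ)) x
              - J₁.indicator (fun _ => (1 : ℝ)) x) ∂μ ≤ ε := by
  have hg := integrable_pow_of_le_two hmom ha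
  set ν := μ.withDensity fun x => ENNReal.ofReal |x ^ a|
  have : IsFiniteMeasure ν := isFiniteMeasure_withDensity_ofReal hg.abs.hasFiniteIntegral
  obtain ⟨T, hT⟩ := exists_finset_measureReal_preimage_Icc_le (ν := ν) (half_pos hε)
  obtain ⟨c, hc, hsign⟩ := exists_sign_threshold_pow a
  set S : Finset EReal := insert ⊥ (insert 0 (T.image (↑)))
  have hcS : c ∈ S := by rcases hc with rfl | rfl <;> simp [S]
  have hcell (r : EReal) : ν.real ((↑) ⁻¹' gridCell S r) ≤ ε / 2 :=
    hT _ _ fun t ht => notMem_Ioo_roundDown_roundUp (by simp [S, ht])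
  refine ⟨gridIntervals S, fun J hJ => ordConnected_of_mem_gridIntervals hJ, fun I hI => ?_⟩
  obtain ⟨J₁, hJ₁, J₂, hJ₂, hbracket, hJ⟩ :=
    exists_bracket_mem_gridIntervals hcS (fun x => (hsign x).1) (fun x => (hsign x).2) hI
  refine ⟨J₁, hJ₁, J₂, hJ₂, hbracket, ?_⟩
  calc _ ≤ ν.real ((↑) ⁻¹' (gridCell S (sInf ((↑) '' I)) ∪ gridCell S (sSup ((↑) '' I)))) :=
        integral_mul_indicator_sub_le_measureReal_withDensity hg
          (ordConnected_of_mem_gridIntervals hJ₁).measurableSet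
          (ordConnected_of_mem_gridIntervals hJ₂).measurableSet
          ((measurableSet_Icc.union measurableSet_Icc).preimage measurable_coe_real_ereal) hJ
    _ ≤ ε / 2 + ε / 2 := (measureReal_union_le _ _).trans (add_le_add (hcell _) (hcell _))
    _ = ε := add_halves ε
end

section
/- Let n ≥ 1, y_1, …, y_n ∈ ℝ and k ≥ 1. For an assignment x : {1, …, n} → {1, …, k}, set σ̂²_x = (1/n) Σ_{j : I_j ≠ ∅} Σ_{i ∈ I_j} (y_i − m̂_j)², where I_j = {i : x_i = j} and m̂_j is the average of the y_i over I_j. Then there exists a partition (I_1, …, I_k) of ℝ into k pairwise disjoint intervals whose union is ℝ such that the assignment x defined by x_i = j if and only if y_i ∈ I_j satisfies σ̂²_x = min over all assignments x' : {1, …, n} → {1, …, k} of σ̂²_{x'}. In other words, the minimal within-cluster sum of squares over all k-clusterings of real data is achieved by a clustering into intervals. -/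
/-!
Fix an optimal assignment `x₀` and let `c j` be the mean of its `j`-th cluster. Reassigning every
point to a nearest centre can only lower `∑ (y i - c (x i))²`, and replacing each centre by the
mean of its new cluster lowers it further, so the nearest-centre assignment is optimal too. Its
clusters are the fibres of a map `ℝ → Fin k`, and these fibres are intervals: for two centres the
set of points closer to the first is a half-line, since `(t - a)² - (t - b)²` is affine in `t`, and
breaking ties towards the smaller index makes each fibre an intersection of such half-lines.
-/

open scoped BigOperators

/-- `1/n` times the within-cluster sum of squared deviations from cluster means, for the
clustering of `y` induced by the assignment `x` (empty clusters contribute `0`). -/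
noncomputable def withinSS (n k : ℕ) (y : Fin n → ℝ) (x : Fin n → Fin k) : ℝ :=
  (1 / (n : ℝ)) * ∑ j : Fin k, ∑ i ∈ Finset.univ.filter (fun i => x i = j),
    (y i - (∑ i' ∈ Finset.univ.filter (fun i' => x i' = j), y i') /
      ((Finset.univ.filter (fun i' => x i' = j)).card : ℝ)) ^ 2

open Finset

section FirstArgmin

variable {ι β : Type*} [Fintype ι] [LinearOrder ι] [Nonempty ι] [LinearOrder β]

noncomputable def firstArgmin (f : ι → β) : ι :=
  (univ.filter fun j => ∀ j', f j ≤ f j').min' <| by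
    obtain ⟨j, -, hj⟩ := univ.exists_min_image f univ_nonempty
    exact ⟨j, mem_filter.2 ⟨mem_univ j, fun j' => hj j' (mem_univ j')⟩⟩

theorem apply_firstArgmin_le (f : ι → β) (j : ι) : f (firstArgmin f) ≤ f j :=
  (mem_filter.1 (min'_mem (univ.filter fun j => ∀ j', f j ≤ f j') _)).2 j

theorem firstArgmin_eq_iff {f : ι → β} {j : ι} :
    firstArgmin f = j ↔ (∀ j', f j ≤ f j') ∧ ∀ j' < j, f j < f j' := by
  constructor
  · rintro rfl
    refine ⟨apply_firstArgmin_le f, fun j' hj' => lt_of_not_ge fun hle => hj'.not_ge ?_⟩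
    exact min'_le _ _
      (mem_filter.2 ⟨mem_univ j', fun j'' => hle.trans (apply_firstArgmin_le f j'')⟩)
  · rintro ⟨hmin, hfirst⟩
    refine (min'_le _ _ (mem_filter.2 ⟨mem_univ j, hmin⟩)).antisymm (not_lt.1 fun hlt => ?_)
    exact (hfirst _ hlt).not_ge (apply_firstArgmin_le f j)

theorem ordConnected_setOf_firstArgmin_eq {α : Type*} [Preorder α] {f : ι → α → β}
    (hle : ∀ j j', {t | f j t ≤ f j' t}.OrdConnected)
    (hlt : ∀ j j', {t | f j t < f j' t}.OrdConnected) (j : ι) :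
    {t | firstArgmin (f · t) = j}.OrdConnected := by
  simp only [firstArgmin_eq_iff, Set.ofPred_and, Set.ofPred_forall]
  exact (Set.ordConnected_iInter fun j' => hle j j').inter
    (Set.ordConnected_iInter fun j' => Set.ordConnected_iInter fun _ => hlt j j')

end FirstArgmin

theorem ordConnected_setOf_sq_sub_le_sq_sub (a b : ℝ) :
    {t : ℝ | (t - a) ^ 2 ≤ (t - b) ^ 2}.OrdConnected := by
  refine ⟨fun t₁ h₁ t₂ h₂ t ht => ?_⟩
  simp only [Set.mem_ofPred_eq] at *
  rcases le_total a b with hab | hab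
  · nlinarith [mul_nonneg (sub_nonneg.2 hab) (sub_nonneg.2 ht.2)]
  · nlinarith [mul_nonneg (sub_nonneg.2 hab) (sub_nonneg.2 ht.1)]

theorem ordConnected_setOf_sq_sub_lt_sq_sub (a b : ℝ) :
    {t : ℝ | (t - a) ^ 2 < (t - b) ^ 2}.OrdConnected := by
  refine ⟨fun t₁ h₁ t₂ h₂ t ht => ?_⟩
  simp only [Set.mem_ofPred_eq] at *
  rcases le_total a b with hab | hab
  · nlinarith [mul_nonneg (sub_nonneg.2 hab) (sub_nonneg.2 ht.2)]
  · nlinarith [mul_nonneg (sub_nonneg.2 hab) (sub_nonneg.2 ht.1)]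

theorem Finset.sum_sq_sub_mean_le {ι : Type*} (s : Finset ι) (w : ι → ℝ) (c : ℝ) :
    ∑ i ∈ s, (w i - (∑ i ∈ s, w i) / #s) ^ 2 ≤ ∑ i ∈ s, (w i - c) ^ 2 := by
  rcases s.eq_empty_or_nonempty with rfl | hs
  · simp
  have hcard : (#s : ℝ) ≠ 0 := Nat.cast_ne_zero.2 hs.card_ne_zero
  generalize hμ : (∑ i ∈ s, w i) / #s = μ
  have hsum : ∑ i ∈ s, w i = #s * μ := by rw [← hμ, mul_div_cancel₀ _ hcard]
  have hgap : ∑ i ∈ s, (w i - c) ^ 2 - ∑ i ∈ s, (w i - μ) ^ 2 = #s * (μ - c) ^ 2 := by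
    calc ∑ i ∈ s, (w i - c) ^ 2 - ∑ i ∈ s, (w i - μ) ^ 2
        = ∑ i ∈ s, (2 * (μ - c) * w i - (μ - c) * (μ + c)) := by
          rw [← sum_sub_distrib]; exact sum_congr rfl fun i _ => by ring
      _ = #s * (μ - c) ^ 2 := by
        rw [sum_sub_distrib, ← mul_sum, hsum, sum_const, nsmul_eq_mul]; ring
  linarith [hgap, mul_nonneg (Nat.cast_nonneg #s : (0 : ℝ) ≤ #s) (sq_nonneg (μ - c))]

section WithinSS

variable {n k : ℕ} (y : Fin n → ℝ) (x : Fin n → Fin k)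

noncomputable def clusterMean (j : Fin k) : ℝ :=
  (∑ i ∈ univ.filter (fun i => x i = j), y i) / #(univ.filter fun i => x i = j)

theorem withinSS_eq_sum_sq_sub_clusterMean :
    withinSS n k y x = 1 / n * ∑ i, (y i - clusterMean y x (x i)) ^ 2 := by
  rw [withinSS, ← sum_fiberwise univ x]
  refine congrArg _ (sum_congr rfl fun j _ => sum_congr rfl fun i hi => ?_)
  rw [(mem_filter.1 hi).2, clusterMean]

theorem withinSS_le_sum_sq_sub (c : Fin k → ℝ) :
    withinSS n k y x ≤ 1 / n * ∑ i, (y i - c (x i)) ^ 2 := by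
  rw [withinSS, ← sum_fiberwise univ x]
  refine mul_le_mul_of_nonneg_left (sum_le_sum fun j _ => ?_) (by positivity)
  calc _ ≤ ∑ i ∈ univ.filter (fun i => x i = j), (y i - c j) ^ 2 := sum_sq_sub_mean_le _ y (c j)
    _ = _ := sum_congr rfl fun i hi => by rw [(mem_filter.1 hi).2]

end WithinSS

theorem kmeans_optimal_intervals_general
    (n k : ℕ) (hk : 1 ≤ k) (y : Fin n → ℝ) :
    ∃ I : Fin k → Set ℝ,
      (∀ j, (I j).OrdConnected) ∧ Pairwise (Function.onFun Disjoint I) ∧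
      (⋃ j, I j) = Set.univ ∧
      ∃ x : Fin n → Fin k,
        (∀ i : Fin n, ∀ j : Fin k, x i = j ↔ y i ∈ I j) ∧
        ∀ x' : Fin n → Fin k, withinSS n k y x ≤ withinSS n k y x' := by
  have : Nonempty (Fin k) := ⟨⟨0, hk⟩⟩
  obtain ⟨x₀, hx₀⟩ := Finite.exists_min (withinSS n k y)
  let c := clusterMean y x₀
  let nearest (t : ℝ) : Fin k := firstArgmin fun j => (t - c j) ^ 2
  refine ⟨fun j => nearest ⁻¹' {j},
    ordConnected_setOf_firstArgmin_eq (fun _ _ => ordConnected_setOf_sq_sub_le_sq_sub _ _)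
      (fun _ _ => ordConnected_setOf_sq_sub_lt_sq_sub _ _),
    pairwise_disjoint_fiber nearest, Set.iUnion_eq_univ_iff.2 fun t => ⟨nearest t, rfl⟩,
    nearest ∘ y, fun _ _ => Iff.rfl, fun x' => ?_⟩
  calc withinSS n k y (nearest ∘ y) ≤ 1 / n * ∑ i, (y i - c (nearest (y i))) ^ 2 :=
        withinSS_le_sum_sq_sub y _ c
    _ ≤ 1 / n * ∑ i, (y i - c (x₀ i)) ^ 2 := by
        refine mul_le_mul_of_nonneg_left (sum_le_sum fun i _ => ?_) (by positivity)
        exact apply_firstArgmin_le (fun j => (y i - c j) ^ 2) (x₀ i)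
    _ = withinSS n k y x₀ := (withinSS_eq_sum_sq_sub_clusterMean y x₀).symm
    _ ≤ withinSS n k y x' := hx₀ x'

/-- The minimal within-cluster sum of squares over all `k`-clusterings of real data is
achieved by a clustering of `ℝ` into `k` intervals. -/
theorem kmeans_optimal_intervals
    (n k : ℕ) (hn : 1 ≤ n) (hk : 1 ≤ k) (y : Fin n → ℝ) :
    ∃ I : Fin k → Set ℝ,
      (∀ j, (I j).OrdConnected) ∧ Pairwise (Function.onFun Disjoint I) ∧
      (⋃ j, I j) = Set.univ ∧
      ∃ x : Fin n → Fin k,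
        (∀ i : Fin n, ∀ j : Fin k, x i = j ↔ y i ∈ I j) ∧
        ∀ x' : Fin n → Fin k, withinSS n k y x ≤ withinSS n k y x' :=
  kmeans_optimal_intervals_general n k hk y
end

section
/- Let k ≥ 1 be an integer, β_1, …, β_k > 0, α_{2,1}, …, α_{2,k} ∈ ℝ, and α_1 ∈ ℝ with α_1 − Σ_{j=1}^k α_{2,j}²/β_j > 0. For η < 0 and θ ∈ ℝ define A(η, θ) = −θ²/(4η) − (1/2) log(−2η). Then the Lebesgue integral ∫_{(−∞,0)} ∫_{ℝ^k} exp( α_1 η + Σ_{j=1}^k α_{2,j} θ_j − Σ_{j=1}^k β_j A(η, θ_j) ) dθ_1 ⋯ dθ_k dη equals 2^{k + (Σ_{j=1}^k β_j)/2} · π^{k/2} · Γ( (Σ_{j=1}^k β_j + k + 2)/2 ) / ( (∏_{j=1}^k √β_j) · ( α_1 − Σ_{j=1}^k α_{2,j}²/β_j )^{(Σ_{j=1}^k β_j + k + 2)/2} ). -/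
/-!
For fixed `η < 0` the integrand factorizes over the coordinates of `θ` into Gaussians of
variance `-2η/βⱼ`, each integrated by completing the square. What remains in `η` is
`(-η) ^ (a - 1) * exp (r * η)` with `a = (∑ βⱼ + k + 2) / 2` and `r = α₁ - ∑ α₂ⱼ² / βⱼ`,
a Gamma integral after the reflection `η ↦ -η`.
-/

open MeasureTheory Real Finset

theorem integral_exp_neg_mul_sq_add_mul {b : ℝ} (hb : b ≠ 0) (c : ℝ) :
    ∫ x : ℝ, exp (-b * x ^ 2 + c * x) = √(π / b) * exp (c ^ 2 / (4 * b)) := by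
  have complete_square : ∀ x : ℝ,
      -b * x ^ 2 + c * x = -b * (x - c / (2 * b)) ^ 2 + c ^ 2 / (4 * b) := fun x => by
    field_simp
    ring
  simp_rw [complete_square, exp_add, integral_mul_const,
    integral_sub_right_eq_self (fun x => exp (-b * x ^ 2)), integral_gaussian]

theorem integral_exp_sum_neg_mul_sq_add_mul {ι : Type*} [Fintype ι] {b : ι → ℝ}
    (hb : ∀ i, b i ≠ 0) (c : ι → ℝ) :
    ∫ x : ι → ℝ, exp (∑ i, (-b i * x i ^ 2 + c i * x i))
      = ∏ i, √(π / b i) * exp (c i ^ 2 / (4 * b i)) := by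
  simp_rw [exp_sum]
  rw [integral_fintype_prod_volume_eq_prod (fun i x => exp (-b i * x ^ 2 + c i * x))]
  exact prod_congr rfl fun i _ => integral_exp_neg_mul_sq_add_mul (hb i) (c i)

theorem integral_Iio_neg_rpow_mul_exp_mul {a r : ℝ} (ha : 0 < a) (hr : 0 < r) :
    ∫ η in Set.Iio 0, (-η) ^ (a - 1) * exp (r * η) = Gamma a / r ^ a := by
  have reflect := integral_comp_neg_Iic 0 fun t => t ^ (a - 1) * exp (-(r * t))
  simp only [mul_neg, neg_neg, neg_zero] at reflect
  rw [setIntegral_congr_set Iio_ae_eq_Iic, reflect, integral_rpow_mul_exp_neg_mul_Ioi ha hr,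
    div_rpow zero_le_one hr.le, one_rpow]
  ring

theorem conjugate_prior_exponent_eq_gaussian {ι : Type*} [Fintype ι] (β α2 : ι → ℝ) (α1 : ℝ)
    {η : ℝ} (hη : η ≠ 0) (θ : ι → ℝ) :
    α1 * η + (∑ j, α2 j * θ j) - ∑ j, β j * (-(θ j) ^ 2 / (4 * η) - (1 / 2) * log (-2 * η))
      = (α1 * η + (∑ j, β j) / 2 * log (2 * -η))
        + ∑ j, (-(β j / (4 * -η)) * θ j ^ 2 + α2 j * θ j) := by
  have quadratic : ∀ j, β j * (-(θ j) ^ 2 / (4 * η)) = β j / (4 * -η) * θ j ^ 2 := fun j => by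
    field_simp
  rw [show -2 * η = 2 * -η by ring]
  simp only [mul_sub, sum_sub_distrib, sum_add_distrib, quadratic, neg_mul, sum_neg_distrib,
    ← sum_mul]
  ring

theorem integral_conjugate_prior_density_theta {ι : Type*} [Fintype ι] {β : ι → ℝ}
    (hβ : ∀ j, 0 < β j) (α2 : ι → ℝ) (α1 : ℝ) {η : ℝ} (hη : η < 0) :
    ∫ θ : ι → ℝ, exp (α1 * η + (∑ j, α2 j * θ j)
        - ∑ j, β j * (-(θ j) ^ 2 / (4 * η) - (1 / 2) * log (-2 * η)))
      = 2 ^ ((Fintype.card ι : ℝ) + (∑ j, β j) / 2) * π ^ ((Fintype.card ι : ℝ) / 2)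
          / (∏ j, √(β j))
        * ((-η) ^ ((∑ j, β j + Fintype.card ι) / 2)
          * exp ((α1 - ∑ j, α2 j ^ 2 / β j) * η)) := by
  simp_rw [conjugate_prior_exponent_eq_gaussian β α2 α1 hη.ne]
  set n : ℝ := (Fintype.card ι : ℝ)
  set t := -η
  have ht : 0 < t := neg_pos.mpr hη
  have factor : ∀ j, √(π / (β j / (4 * t))) * exp (α2 j ^ 2 / (4 * (β j / (4 * t))))
      = 2 * √π * √t / √(β j) * exp (t * (α2 j ^ 2 / β j)) := fun j => by
    have hπ : 0 ≤ 2 ^ 2 * π := by positivity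
    rw [show π / (β j / (4 * t)) = 2 ^ 2 * π * t / β j by field_simp; ring,
      sqrt_div (mul_nonneg hπ ht.le), sqrt_mul hπ, sqrt_mul (by positivity), sqrt_sq zero_le_two]
    congr 2
    field_simp
  have log_term : exp ((∑ j, β j) / 2 * log (2 * t))
      = 2 ^ ((∑ j, β j) / 2) * t ^ ((∑ j, β j) / 2) := by
    rw [mul_comm, ← rpow_def_of_pos (by positivity), mul_rpow zero_le_two ht.le]
  have sqrt_pow : (2 * √π * √t) ^ Fintype.card ι = 2 ^ n * π ^ (n / 2) * t ^ (n / 2) := by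
    rw [rpow_div_two_eq_sqrt _ pi_pos.le, rpow_div_two_eq_sqrt _ ht.le]
    simp only [n, rpow_natCast, mul_pow]
  have exp_term : exp (α1 * η) * exp (t * ∑ j, α2 j ^ 2 / β j)
      = exp ((α1 - ∑ j, α2 j ^ 2 / β j) * η) := by
    rw [← exp_add]
    congr 1
    simp only [t]
    ring
  simp_rw [exp_add, integral_const_mul, integral_exp_sum_neg_mul_sq_add_mul
      (fun j => (div_pos (hβ j) (mul_pos four_pos ht)).ne'), factor, prod_mul_distrib,
    prod_div_distrib, prod_const, card_univ, ← exp_sum, ← mul_sum, sqrt_pow, log_term]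
  rw [rpow_add zero_lt_two, add_div, rpow_add ht, ← exp_term]
  ring

theorem conjugate_prior_normalizing_constant_general
    (k : ℕ)
    (β : Fin k → ℝ) (hβ : ∀ j, 0 < β j)
    (α2 : Fin k → ℝ) (α1 : ℝ)
    (hα : 0 < α1 - ∑ j, (α2 j) ^ 2 / β j) :
    (∫ η in Set.Iio (0 : ℝ), ∫ θ : Fin k → ℝ,
        Real.exp (α1 * η + (∑ j, α2 j * θ j)
          - ∑ j, β j * (-(θ j) ^ 2 / (4 * η) - (1 / 2) * Real.log (-2 * η))))
      = (2 : ℝ) ^ ((k : ℝ) + (∑ j, β j) / 2) * Real.pi ^ ((k : ℝ) / 2) *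
          Real.Gamma (((∑ j, β j) + (k : ℝ) + 2) / 2) /
        ((∏ j, Real.sqrt (β j)) *
          (α1 - ∑ j, (α2 j) ^ 2 / β j) ^ (((∑ j, β j) + (k : ℝ) + 2) / 2)) := by
  set a := ((∑ j, β j) + (k : ℝ) + 2) / 2
  have ha : 0 < a := by
    have : 0 ≤ ∑ j, β j := sum_nonneg fun j _ => (hβ j).le
    positivity
  calc _ = ∫ η in Set.Iio 0, 2 ^ ((k : ℝ) + (∑ j, β j) / 2) * π ^ ((k : ℝ) / 2)
          / (∏ j, √(β j)) * ((-η) ^ (a - 1) * exp ((α1 - ∑ j, α2 j ^ 2 / β j) * η)) := by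
        refine setIntegral_congr_fun measurableSet_Iio fun η hη => ?_
        rw [integral_conjugate_prior_density_theta hβ α2 α1 hη, Fintype.card_fin,
          show a - 1 = ((∑ j, β j) + k) / 2 by ring]
    _ = _ := by
        rw [integral_const_mul, integral_Iio_neg_rpow_mul_exp_mul ha hα]
        ring

/-- Normalizing constant of the conjugate exponential prior for Gaussian emissions with
unknown common variance: with `A(η, θ) = -θ²/(4η) - (1/2) log(-2η)`, the integral of
`exp(α₁ η + ∑ⱼ α₂ⱼ θⱼ - ∑ⱼ βⱼ A(η, θⱼ))` over `η < 0`, `θ ∈ ℝᵏ` equals the stated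
closed-form expression involving the Gamma function. -/
theorem conjugate_prior_normalizing_constant
    (k : ℕ) (hk : 1 ≤ k)
    (β : Fin k → ℝ) (hβ : ∀ j, 0 < β j)
    (α2 : Fin k → ℝ) (α1 : ℝ)
    (hα : 0 < α1 - ∑ j, (α2 j) ^ 2 / β j) :
    (∫ η in Set.Iio (0 : ℝ), ∫ θ : Fin k → ℝ,
        Real.exp (α1 * η + (∑ j, α2 j * θ j)
          - ∑ j, β j * (-(θ j) ^ 2 / (4 * η) - (1 / 2) * Real.log (-2 * η))))
      = (2 : ℝ) ^ ((k : ℝ) + (∑ j, β j) / 2) * Real.pi ^ ((k : ℝ) / 2) *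
          Real.Gamma (((∑ j, β j) + (k : ℝ) + 2) / 2) /
        ((∏ j, Real.sqrt (β j)) *
          (α1 - ∑ j, (α2 j) ^ 2 / β j) ^ (((∑ j, β j) + (k : ℝ) + 2) / 2)) :=
  conjugate_prior_normalizing_constant_general k β hβ α2 α1 hα
end
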